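/- arXiv:2212.12229 — 3 statements merged into one kernel-verified Lean document; each statement's English description precedes it below -/
import Mathlib

section
/- (Proposition 3.3: composition of matrices with rapid off-diagonal decay.) Let p, q ∈ ℝ and let M, M' : Γ̃ × Γ̃ → ℂ be matrices such that M has rapid off-diagonal decay of order p and M' has rapid off-diagonal decay of order q. Then for all α̃, β̃ ∈ Γ̃ the series (M·M')_{α̃,β̃} := ∑_{γ̃∈Γ̃} M_{α̃,γ̃} M'_{γ̃,β̃} converges absolutely, and the matrix M·M' has rapid off-diagonal decay of order p+q. -/
open MeasureTheory Complex
open scoped BigOperators ComplexConjugate ComplexInnerProductSpace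

noncomputable section

/-- Euclidean dot product on `ℝ^d` (realized as `Fin d → ℝ`). -/
def dotR {d : ℕ} (x y : Fin d → ℝ) : ℝ := ∑ i, x i * y i

/-- Japanese bracket `⟨x⟩ = (1+|x|²)^(1/2)` (Euclidean norm). -/
def jap {d : ℕ} (x : Fin d → ℝ) : ℝ := Real.sqrt (1 + dotR x x)

/-- Euclidean norm on `ℝ^d`. -/
def enr {d : ℕ} (x : Fin d → ℝ) : ℝ := Real.sqrt (dotR x x)

/-- Embedding of the lattice `ℤ^d` into `ℝ^d`. -/
def zToR {d : ℕ} (γ : Fin d → ℤ) : Fin d → ℝ := fun i => (γ i : ℝ)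

/-- The point `2πk` of the dual lattice `(2πℤ)^d`, for `k ∈ ℤ^d`. -/
def dualV {d : ℕ} (k : Fin d → ℤ) : Fin d → ℝ := fun i => 2 * Real.pi * (k i : ℝ)

/-- The magnetic phase `Λ^A(x,y) = exp(−i ∫₀¹ ⟨A(x+t(y−x)), y−x⟩ dt)`. -/
def magPhase {d : ℕ} (A : (Fin d → ℝ) → (Fin d → ℝ)) (x y : Fin d → ℝ) : ℂ :=
  Complex.exp (-Complex.I *
    ((∫ t in (0:ℝ)..1, dotR (A (x + t • (y - x))) (y - x)) : ℝ))

/-- The magnetic Gabor frame function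
`G^A_{γ,γ*}(x) = Λ^A(x,γ) θ_{γ*}(x−γ) g(x−γ)` with `γ* = 2πk`. -/
def gaborF {d : ℕ} (A : (Fin d → ℝ) → (Fin d → ℝ)) (g : (Fin d → ℝ) → ℝ)
    (γ k : Fin d → ℤ) (x : Fin d → ℝ) : ℂ :=
  magPhase A x (zToR γ) * (((2 * Real.pi) ^ (-(d : ℝ) / 2) : ℝ) : ℂ) *
    Complex.exp (Complex.I * ((dotR (dualV k) (x - zToR γ) / (2 * Real.pi) : ℝ) : ℂ)) *
    ((g (x - zToR γ) : ℝ) : ℂ)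

/-- `g` is a smooth `[0,1]`-valued quadratic partition of unity with support in `(−1,1)^d`. -/
def IsQuadPartition {d : ℕ} (g : (Fin d → ℝ) → ℝ) : Prop :=
  ContDiff ℝ (⊤ : ℕ∞) g ∧ (∀ x, g x ∈ Set.Icc (0:ℝ) 1) ∧
    tsupport g ⊆ Set.univ.pi (fun _ : Fin d => Set.Ioo (-1:ℝ) 1) ∧
    ∀ x, HasSum (fun γ : Fin d → ℤ => (g (x - zToR γ)) ^ 2) 1

/-- Iterated directional derivative along a list of directions. -/
def dList {E F : Type*} [NormedAddCommGroup E] [NormedSpace ℝ E]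
    [NormedAddCommGroup F] [NormedSpace ℝ F] : List E → (E → F) → (E → F)
  | [], f => f
  | v :: L, f => fun x => fderiv ℝ (dList L f) x v

/-- Direction of differentiation in the first (position) variable. -/
def dirX {d : ℕ} (j : Fin d) : (Fin d → ℝ) × (Fin d → ℝ) := (Pi.single j 1, 0)

/-- Direction of differentiation in the second (momentum) variable. -/
def dirXi {d : ℕ} (j : Fin d) : (Fin d → ℝ) × (Fin d → ℝ) := (0, Pi.single j 1)

/-- The Hörmander class `S^p_0(ℝ^{2d})`. -/
def HormClass (d : ℕ) (p : ℝ) (Φ : ((Fin d → ℝ) × (Fin d → ℝ)) → ℂ) : Prop :=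
  ContDiff ℝ (⊤ : ℕ∞) Φ ∧
    ∀ a b : List (Fin d), ∃ C : ℝ,
      ∀ x ξ : Fin d → ℝ,
        ‖dList (a.map dirX ++ b.map dirXi) Φ (x, ξ)‖ ≤ C * jap ξ ^ p

/-- The magnetic field `B_{jk} = ∂_j A_k − ∂_k A_j` of a vector potential `A`. -/
def Bof {d : ℕ} (A : (Fin d → ℝ) → (Fin d → ℝ)) (j k : Fin d) (x : Fin d → ℝ) : ℝ :=
  fderiv ℝ A x (Pi.single j 1) k - fderiv ℝ A x (Pi.single k 1) j

/-- Each component `B j k` is bounded together with all its partial derivatives. -/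
def BBounded {d : ℕ} (B : Fin d → Fin d → (Fin d → ℝ) → ℝ) : Prop :=
  ∀ j k : Fin d, ∀ L : List (Fin d), ∃ C : ℝ,
    ∀ x, ‖dList (L.map (fun i => Pi.single i (1:ℝ))) (B j k) x‖ ≤ C

/-- Flux of `B` through the triangle with vertices `a, b, c`. -/
def fluxB {d : ℕ} (B : Fin d → Fin d → (Fin d → ℝ) → ℝ) (a b c : Fin d → ℝ) : ℝ :=
  ∫ t in (0:ℝ)..1, ∫ s in (0:ℝ)..1,
    ∑ j, ∑ k, B j k (a + t • (b - a) + (s * t) • (c - b)) *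
      ((b - a) j + s * (c - b) j) * (t * (c - b) k)

/-- `Ω^B(a,b,c) = exp(−i ∫_{⟨a,b,c⟩} B)`. -/
def OmegaB {d : ℕ} (B : Fin d → Fin d → (Fin d → ℝ) → ℝ) (a b c : Fin d → ℝ) : ℂ :=
  Complex.exp (-Complex.I * (fluxB B a b c : ℝ))


/-- A `Γ̃ × Γ̃`-indexed matrix (with `Γ̃ = ℤ^d × (2πℤ)^d`, the dual component being
parametrized by `k ↦ 2πk`) has rapid off-diagonal decay of order `p`. -/
def RapidDecay {d : ℕ} (p : ℝ)
    (M : ((Fin d → ℤ) × (Fin d → ℤ)) → ((Fin d → ℤ) × (Fin d → ℤ)) → ℂ) : Prop :=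
  ∀ n₁ n₂ : ℕ, ∃ C : ℝ, 0 < C ∧
    ∀ α αs β βs : Fin d → ℤ,
      ‖M (α, αs) (β, βs)‖ ≤
        C * (jap (zToR α - zToR β) ^ n₁)⁻¹ * (jap (dualV αs - dualV βs) ^ n₂)⁻¹ *
          jap (dualV αs + dualV βs) ^ p

set_option linter.unusedVariables false

namespace Aux
variable {d : ℕ}

lemma dot_self_nonneg (x : Fin d → ℝ) : 0 ≤ dotR x x :=
  Finset.sum_nonneg fun i _ => mul_self_nonneg _

lemma one_add_pos (x : Fin d → ℝ) : 0 < 1 + dotR x x := by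
  linarith [dot_self_nonneg x]

lemma one_le_jap (x : Fin d → ℝ) : 1 ≤ jap x := by
  have h := Real.sqrt_le_sqrt (show (1:ℝ) ≤ 1 + dotR x x by linarith [dot_self_nonneg x])
  simpa [jap] using h

lemma jap_pos (x : Fin d → ℝ) : 0 < jap x := lt_of_lt_of_le one_pos (one_le_jap x)

lemma jap_nonneg (x : Fin d → ℝ) : 0 ≤ jap x := (jap_pos x).le

lemma jap_sq (x : Fin d → ℝ) : jap x ^ 2 = 1 + dotR x x := by
  rw [jap, Real.sq_sqrt (one_add_pos x).le]

lemma jap_neg (x : Fin d → ℝ) : jap (-x) = jap x := by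
  have : dotR (-x) (-x) = dotR x x := by
    simp [dotR]
  rw [jap, this, jap]

/-- Peetre-type: `⟨x+y⟩ ≤ √2 ⟨x⟩ ⟨y⟩`. -/
lemma jap_add_le (x y : Fin d → ℝ) : jap (x + y) ≤ Real.sqrt 2 * (jap x * jap y) := by
  have hdot : dotR (x+y) (x+y) = dotR x x + 2 * dotR x y + dotR y y := by
    simp only [dotR, Pi.add_apply, Finset.mul_sum, ← Finset.sum_add_distrib]
    apply Finset.sum_congr rfl; intro i _; ring
  have h2 : 2 * dotR x y ≤ dotR x x + dotR y y := by
    have := dot_self_nonneg (x - y)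
    have : dotR (x-y) (x-y) = dotR x x - 2 * dotR x y + dotR y y := by
      simp only [dotR, Pi.sub_apply, Finset.mul_sum, ← Finset.sum_add_distrib,
        ← Finset.sum_sub_distrib]
      apply Finset.sum_congr rfl; intro i _; ring
    nlinarith [dot_self_nonneg (x - y)]
  have key : 1 + dotR (x+y) (x+y) ≤ 2 * ((1 + dotR x x) * (1 + dotR y y)) := by
    rw [hdot]
    nlinarith [dot_self_nonneg x, dot_self_nonneg y, mul_nonneg (dot_self_nonneg x) (dot_self_nonneg y)]
  calc jap (x+y) = Real.sqrt (1 + dotR (x+y) (x+y)) := rfl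
    _ ≤ Real.sqrt (2 * ((1 + dotR x x) * (1 + dotR y y))) := Real.sqrt_le_sqrt key
    _ = Real.sqrt 2 * (jap x * jap y) := by
        rw [Real.sqrt_mul (by norm_num), Real.sqrt_mul (one_add_pos x).le]; rfl

/-- triangle for differences: `⟨a−b⟩ ≤ √2 ⟨a−c⟩ ⟨c−b⟩`. -/
lemma jap_tri (a b c : Fin d → ℝ) : jap (a - b) ≤ Real.sqrt 2 * (jap (a - c) * jap (c - b)) := by
  have : a - b = (a - c) + (c - b) := by abel
  rw [this]; exact jap_add_le _ _

/-- Peetre's inequality for real exponents. -/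
lemma peetre (a b : Fin d → ℝ) (s : ℝ) :
    jap a ^ s ≤ (Real.sqrt 2 * jap (a - b)) ^ |s| * jap b ^ s := by
  set K := Real.sqrt 2 * jap (a - b) with hK
  have hK1 : 1 ≤ K := by
    have h2 : (1:ℝ) ≤ Real.sqrt 2 := by
      rw [show (1:ℝ) = Real.sqrt 1 by simp]; exact Real.sqrt_le_sqrt (by norm_num)
    calc (1:ℝ) = 1 * 1 := by ring
      _ ≤ Real.sqrt 2 * jap (a - b) := mul_le_mul h2 (one_le_jap _) one_pos.le (by positivity)
  have hKpos : 0 < K := lt_of_lt_of_le one_pos hK1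
  rcases le_or_gt 0 s with hs | hs
  · have h1 : jap a ≤ K * jap b := by
      have := jap_tri a 0 b
      simpa [sub_zero, hK, mul_assoc] using this
    calc jap a ^ s ≤ (K * jap b) ^ s :=
          Real.rpow_le_rpow (jap_nonneg a) h1 hs
      _ = K ^ s * jap b ^ s := Real.mul_rpow hKpos.le (jap_nonneg b)
      _ = K ^ |s| * jap b ^ s := by rw [_root_.abs_of_nonneg hs]
  · have h1 : jap b ≤ K * jap a := by
      have := jap_tri b 0 a
      have hnb : jap (b - a) = jap (a - b) := by
        rw [show b - a = -(a-b) by abel, jap_neg]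
      simpa [sub_zero, hK, hnb, mul_assoc] using this
    have h2 : K⁻¹ * jap b ≤ jap a := by
      rw [inv_mul_le_iff₀ hKpos]; exact h1
    calc jap a ^ s ≤ (K⁻¹ * jap b) ^ s :=
          Real.rpow_le_rpow_of_nonpos (mul_pos (inv_pos.mpr hKpos) (jap_pos b)) h2 hs.le
      _ = (K⁻¹) ^ s * jap b ^ s := Real.mul_rpow (inv_pos.mpr hKpos).le (jap_nonneg b)
      _ = K ^ (-s) * jap b ^ s := by rw [Real.inv_rpow hKpos.le, ← Real.rpow_neg hKpos.le]
      _ = K ^ |s| * jap b ^ s := by rw [_root_.abs_of_neg hs]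


lemma summable_int_inv : Summable (fun n : ℤ => ((1:ℝ) + (n:ℝ)^2)⁻¹) := by
  have h1 : Summable (fun n : ℤ => 1 / (n:ℝ)^2) := Real.summable_one_div_int_pow.mpr one_lt_two
  have h2 : Summable (fun n : ℤ => if n = 0 then (1:ℝ) else 0) :=
    summable_of_ne_finset_zero (s := {0}) (by intro b hb; simp at hb ⊢; exact hb)
  apply Summable.of_nonneg_of_le (fun n => by positivity)
    (f := fun n : ℤ => 1 / (n:ℝ)^2 + if n = 0 then (1:ℝ) else 0) _ (h1.add h2)
  intro n
  by_cases hn : n = 0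
  · simp [hn]
  · have hn1 : (1:ℝ) ≤ (n:ℝ)^2 := by
      have h0 : (1:ℤ) ≤ n^2 := by
        have := Int.one_le_abs (show n ≠ 0 from hn)
        nlinarith [_root_.sq_abs n]
      exact_mod_cast h0
    rw [if_neg hn, add_zero, one_div, inv_le_inv₀ (by positivity) (by positivity)]
    linarith

lemma summable_pi_prod : Summable (fun γ : Fin d → ℤ => ∏ i, ((1:ℝ) + (γ i:ℝ)^2)⁻¹) := by
  induction d with
  | zero => exact Summable.of_finite
  | succ n ih =>
    have h := Summable.mul_of_nonneg summable_int_inv ih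
      (fun n => by positivity) (fun γ => by positivity)
    have := (Fin.consEquiv (fun _ : Fin (n+1) => ℤ)).symm.summable_iff
      (f := fun x : ℤ × (Fin n → ℤ) => ((1:ℝ) + (x.1:ℝ)^2)⁻¹ * ∏ i, ((1:ℝ) + (x.2 i:ℝ)^2)⁻¹)
    rw [← this] at h
    apply h.congr
    intro γ
    simp [Fin.consEquiv, Fin.prod_univ_succ, Fin.tail, mul_comm]

lemma summable_japZ : Summable (fun γ : Fin d → ℤ => ((jap (zToR γ)) ^ (2*d))⁻¹) := by
  apply Summable.of_nonneg_of_le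
    (fun γ => inv_nonneg.mpr (pow_nonneg (jap_nonneg _) _)) _ summable_pi_prod
  intro γ
  have hprod : ∏ i, ((1:ℝ) + (γ i:ℝ)^2) ≤ (jap (zToR γ)) ^ (2*d) := by
    have heq : (jap (zToR γ)) ^ (2*d) = (1 + dotR (zToR γ) (zToR γ)) ^ d := by
      rw [pow_mul, jap_sq]
    rw [heq]
    calc ∏ i, ((1:ℝ) + (γ i:ℝ)^2)
        ≤ ∏ _i : Fin d, (1 + dotR (zToR γ) (zToR γ)) := by
          apply Finset.prod_le_prod (fun i _ => by positivity)
          intro i _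
          have hle : (γ i:ℝ)^2 ≤ dotR (zToR γ) (zToR γ) := by
            rw [dotR]
            have := Finset.single_le_sum (f := fun j => zToR γ j * zToR γ j)
              (fun j _ => mul_self_nonneg _) (Finset.mem_univ i)
            simpa [zToR, sq] using this
          linarith
      _ = (1 + dotR (zToR γ) (zToR γ)) ^ d := by
          simp [Finset.prod_const]
  calc ((jap (zToR γ)) ^ (2*d))⁻¹ ≤ (∏ i, ((1:ℝ) + (γ i:ℝ)^2))⁻¹ := by
        apply inv_anti₀ (by positivity) hprod
    _ = ∏ i, ((1:ℝ) + (γ i:ℝ)^2)⁻¹ := by rw [← Finset.prod_inv_distrib]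

lemma jap_dualV_ge (k : Fin d → ℤ) : jap (zToR k) ≤ jap (dualV k) := by
  apply Real.sqrt_le_sqrt
  have : dotR (zToR k) (zToR k) ≤ dotR (dualV k) (dualV k) := by
    apply Finset.sum_le_sum
    intro i _
    have hpi : (1:ℝ) ≤ 2 * Real.pi := by nlinarith [Real.pi_gt_three]
    simp only [zToR, dualV]
    nlinarith [sq_nonneg ((k i:ℝ)), sq_nonneg (2*Real.pi - 1), mul_self_nonneg ((k i:ℝ))]
  linarith

lemma zToR_sub (a b : Fin d → ℤ) : zToR a - zToR b = zToR (a - b) := by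
  funext i; simp [zToR]

lemma dualV_sub (a b : Fin d → ℤ) : dualV a - dualV b = dualV (a - b) := by
  funext i; simp [dualV]; ring

lemma aux_inv {A B r : ℝ} (hA : 0 < A) (hB : 0 < B) (h : B ≤ r * A) : A⁻¹ ≤ r * B⁻¹ := by
  have hr : 0 ≤ r := by
    by_contra hneg
    push_neg at hneg
    nlinarith
  have h1 : A⁻¹ * B ≤ A⁻¹ * (r * A) := mul_le_mul_of_nonneg_left h (inv_nonneg.mpr hA.le)
  calc A⁻¹ = A⁻¹ * B * B⁻¹ := by field_simp
    _ ≤ (A⁻¹ * (r * A)) * B⁻¹ := mul_le_mul_of_nonneg_right h1 (inv_nonneg.mpr hB.le)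
    _ = r * B⁻¹ := by field_simp

/-- `(⟨a−c⟩ⁿ⟨c−b⟩ⁿ)⁻¹ ≤ (√2)ⁿ (⟨a−b⟩ⁿ)⁻¹`. -/
lemma tri_inv_pow (a b c : Fin d → ℝ) (n : ℕ) :
    (jap (a - c) ^ n * jap (c - b) ^ n)⁻¹ ≤ (Real.sqrt 2) ^ n * (jap (a - b) ^ n)⁻¹ := by
  apply aux_inv (mul_pos (pow_pos (jap_pos _) n) (pow_pos (jap_pos _) n))
    (pow_pos (jap_pos _) n)
  calc jap (a - b) ^ n ≤ (Real.sqrt 2 * (jap (a - c) * jap (c - b))) ^ n :=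
        pow_le_pow_left₀ (jap_nonneg _) (jap_tri a b c) n
    _ = (Real.sqrt 2) ^ n * (jap (a - c) ^ n * jap (c - b) ^ n) := by
        rw [mul_pow, mul_pow]

/-- absorption: `(⟨a−b⟩ⁿ)⁻¹ ⟨a⟩^s ≤ (√2)^{|s|} ⟨b⟩^s` when `|s| ≤ n`. -/
lemma absorb {D : ℝ} (a b : Fin d → ℝ) (s : ℝ) (n : ℕ) (hD : jap (a - b) = D)
    (hn : |s| ≤ (n : ℝ)) :
    (D ^ n)⁻¹ * jap a ^ s ≤ (Real.sqrt 2) ^ |s| * jap b ^ s := by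
  have hD1 : (1:ℝ) ≤ D := hD ▸ one_le_jap _
  have hDpos : (0:ℝ) < D := lt_of_lt_of_le one_pos hD1
  have hr2 : (0:ℝ) ≤ Real.sqrt 2 := Real.sqrt_nonneg 2
  have hbs : (0:ℝ) ≤ jap b ^ s := Real.rpow_nonneg (jap_nonneg b) s
  have h2 : jap a ^ s ≤ (Real.sqrt 2) ^ |s| * D ^ |s| * jap b ^ s := by
    have := peetre a b s
    rw [hD] at this
    calc jap a ^ s ≤ (Real.sqrt 2 * D) ^ |s| * jap b ^ s := this
      _ = (Real.sqrt 2) ^ |s| * D ^ |s| * jap b ^ s := by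
          rw [Real.mul_rpow hr2 hDpos.le]
  have h3 : D ^ |s| ≤ (D:ℝ) ^ n := by
    rw [← Real.rpow_natCast D n]
    exact Real.rpow_le_rpow_of_exponent_le hD1 hn
  have hinv : (0:ℝ) ≤ (D ^ n)⁻¹ := inv_nonneg.mpr (pow_pos hDpos n).le
  calc (D ^ n)⁻¹ * jap a ^ s
      ≤ (D ^ n)⁻¹ * ((Real.sqrt 2) ^ |s| * D ^ |s| * jap b ^ s) :=
        mul_le_mul_of_nonneg_left h2 hinv
    _ = ((D ^ n)⁻¹ * D ^ |s|) * ((Real.sqrt 2) ^ |s| * jap b ^ s) := by ring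
    _ ≤ 1 * ((Real.sqrt 2) ^ |s| * jap b ^ s) := by
        apply mul_le_mul_of_nonneg_right _
          (mul_nonneg (Real.rpow_nonneg hr2 _) hbs)
        calc (D ^ n)⁻¹ * D ^ |s| ≤ (D ^ n)⁻¹ * D ^ n :=
              mul_le_mul_of_nonneg_left h3 hinv
          _ = 1 := inv_mul_cancel₀ (pow_pos hDpos n).ne'
    _ = (Real.sqrt 2) ^ |s| * jap b ^ s := one_mul _

set_option maxHeartbeats 1000000 in
/-- Key termwise estimate. -/
lemma key {p q : ℝ}
    {M M' : ((Fin d → ℤ) × (Fin d → ℤ)) → ((Fin d → ℤ) × (Fin d → ℤ)) → ℂ}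
    (hM : RapidDecay p M) (hM' : RapidDecay q M') (n₁ n₂ : ℕ) :
    ∃ C : ℝ, 0 < C ∧ ∀ α αs β βs γ γs : Fin d → ℤ,
      ‖M (α, αs) (γ, γs) * M' (γ, γs) (β, βs)‖ ≤
        C * (jap (zToR α - zToR β) ^ n₁)⁻¹ * (jap (dualV αs - dualV βs) ^ n₂)⁻¹ *
          jap (dualV αs + dualV βs) ^ (p + q) *
          ((jap (zToR (α - γ)) ^ (2*d))⁻¹ * (jap (zToR (αs - γs)) ^ (2*d))⁻¹) := by
  set m := 2*d with hm
  set Np := ⌈|p|⌉₊ with hNp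
  set Nq := ⌈|q|⌉₊ with hNq
  obtain ⟨C₁, hC₁, hM1⟩ := hM (n₁+m) (n₂+m+Nq)
  obtain ⟨C₂, hC₂, hM2⟩ := hM' (n₁+m) (n₂+m+Np)
  have hr2 : (0:ℝ) ≤ Real.sqrt 2 := Real.sqrt_nonneg 2
  refine ⟨C₁ * C₂ * (Real.sqrt 2) ^ (n₁+n₂) * ((Real.sqrt 2) ^ |p| * (Real.sqrt 2) ^ |q|),
    by positivity, ?_⟩
  intro α αs β βs γ γs
  set x1 := jap (zToR α - zToR γ) with hx1
  set x2 := jap (zToR γ - zToR β) with hx2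
  set x0 := jap (zToR α - zToR β) with hx0
  set y1 := jap (dualV αs - dualV γs) with hy1
  set y2 := jap (dualV γs - dualV βs) with hy2
  set y0 := jap (dualV αs - dualV βs) with hy0
  set u1 := jap (dualV αs + dualV γs) with hu1
  set u2 := jap (dualV γs + dualV βs) with hu2
  set u0 := jap (dualV αs + dualV βs) with hu0
  have hx1p : (0:ℝ) < x1 := jap_pos _
  have hx2p : (0:ℝ) < x2 := jap_pos _
  have hy1p : (0:ℝ) < y1 := jap_pos _
  have hy2p : (0:ℝ) < y2 := jap_pos _
  have hu0p : (0:ℝ) < u0 := jap_pos _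
  -- individual bounds
  have B1 := hM1 α αs γ γs
  have B2 := hM2 γ γs β βs
  -- grouped factor bounds
  have G1 : (x1 ^ n₁ * x2 ^ n₁)⁻¹ ≤ (Real.sqrt 2) ^ n₁ * (x0 ^ n₁)⁻¹ :=
    tri_inv_pow (zToR α) (zToR β) (zToR γ) n₁
  have G3 : (y1 ^ n₂ * y2 ^ n₂)⁻¹ ≤ (Real.sqrt 2) ^ n₂ * (y0 ^ n₂)⁻¹ :=
    tri_inv_pow (dualV αs) (dualV βs) (dualV γs) n₂
  have G5 : (y1 ^ Nq)⁻¹ * u2 ^ q ≤ (Real.sqrt 2) ^ |q| * u0 ^ q := by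
    apply absorb (dualV γs + dualV βs) (dualV αs + dualV βs) q Nq _ (Nat.le_ceil _)
    rw [hy1, show dualV γs + dualV βs - (dualV αs + dualV βs) = -(dualV αs - dualV γs) by abel,
      jap_neg]
  have G6 : (y2 ^ Np)⁻¹ * u1 ^ p ≤ (Real.sqrt 2) ^ |p| * u0 ^ p := by
    apply absorb (dualV αs + dualV γs) (dualV αs + dualV βs) p Np _ (Nat.le_ceil _)
    rw [hy2, show dualV αs + dualV γs - (dualV αs + dualV βs) = dualV γs - dualV βs by abel]
  have G2 : (x1 ^ m)⁻¹ * (x2 ^ m)⁻¹ ≤ (jap (zToR (α - γ)) ^ m)⁻¹ * 1 := by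
    rw [hx1, zToR_sub]
    apply mul_le_mul_of_nonneg_left _ (inv_nonneg.mpr (pow_pos (jap_pos _) m).le)
    rw [inv_le_one_iff₀]
    right
    exact one_le_pow₀ (one_le_jap _)
  have G4 : (y1 ^ m)⁻¹ * (y2 ^ m)⁻¹ ≤ (jap (zToR (αs - γs)) ^ m)⁻¹ * 1 := by
    have h1 : (y1 ^ m)⁻¹ ≤ (jap (zToR (αs - γs)) ^ m)⁻¹ := by
      apply inv_anti₀ (pow_pos (jap_pos _) m)
      apply pow_le_pow_left₀ (jap_nonneg _)
      rw [hy1, dualV_sub]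
      exact jap_dualV_ge _
    have h2 : (y2 ^ m)⁻¹ ≤ 1 := by
      rw [inv_le_one_iff₀]; right; exact one_le_pow₀ (one_le_jap _)
    exact mul_le_mul h1 h2 (inv_nonneg.mpr (pow_pos hy2p m).le)
      (inv_nonneg.mpr (pow_pos (jap_pos _) m).le)
  -- nonnegativity facts for gcongr
  have n1 : (0:ℝ) ≤ (x1 ^ n₁ * x2 ^ n₁)⁻¹ :=
    inv_nonneg.mpr (mul_nonneg (pow_pos hx1p _).le (pow_pos hx2p _).le)
  have n2 : (0:ℝ) ≤ (y1 ^ n₂ * y2 ^ n₂)⁻¹ :=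
    inv_nonneg.mpr (mul_nonneg (pow_pos hy1p _).le (pow_pos hy2p _).le)
  have n3 : (0:ℝ) ≤ (y1 ^ Nq)⁻¹ * u2 ^ q :=
    mul_nonneg (inv_nonneg.mpr (pow_pos hy1p _).le) (Real.rpow_nonneg (jap_nonneg _) q)
  have n4 : (0:ℝ) ≤ (y2 ^ Np)⁻¹ * u1 ^ p :=
    mul_nonneg (inv_nonneg.mpr (pow_pos hy2p _).le) (Real.rpow_nonneg (jap_nonneg _) p)
  have n5 : (0:ℝ) ≤ (x1 ^ m)⁻¹ * (x2 ^ m)⁻¹ :=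
    mul_nonneg (inv_nonneg.mpr (pow_pos hx1p _).le) (inv_nonneg.mpr (pow_pos hx2p _).le)
  have n6 : (0:ℝ) ≤ (y1 ^ m)⁻¹ * (y2 ^ m)⁻¹ :=
    mul_nonneg (inv_nonneg.mpr (pow_pos hy1p _).le) (inv_nonneg.mpr (pow_pos hy2p _).le)
  have m1 : (0:ℝ) ≤ (Real.sqrt 2) ^ n₁ * (x0 ^ n₁)⁻¹ :=
    mul_nonneg (pow_nonneg hr2 _) (inv_nonneg.mpr (pow_pos (jap_pos _) _).le)
  have m2 : (0:ℝ) ≤ (Real.sqrt 2) ^ n₂ * (y0 ^ n₂)⁻¹ :=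
    mul_nonneg (pow_nonneg hr2 _) (inv_nonneg.mpr (pow_pos (jap_pos _) _).le)
  have m3 : (0:ℝ) ≤ (Real.sqrt 2) ^ |q| * u0 ^ q :=
    mul_nonneg (Real.rpow_nonneg hr2 _) (Real.rpow_nonneg (jap_nonneg _) q)
  have m4 : (0:ℝ) ≤ (Real.sqrt 2) ^ |p| * u0 ^ p :=
    mul_nonneg (Real.rpow_nonneg hr2 _) (Real.rpow_nonneg (jap_nonneg _) p)
  have m5 : (0:ℝ) ≤ (jap (zToR (α - γ)) ^ m)⁻¹ * 1 :=
    mul_nonneg (inv_nonneg.mpr (pow_pos (jap_pos _) _).le) one_pos.le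
  have m6 : (0:ℝ) ≤ (jap (zToR (αs - γs)) ^ m)⁻¹ * 1 :=
    mul_nonneg (inv_nonneg.mpr (pow_pos (jap_pos _) _).le) one_pos.le
  have hCC : (0:ℝ) ≤ C₁ * C₂ := mul_nonneg hC₁.le hC₂.le
  calc ‖M (α, αs) (γ, γs) * M' (γ, γs) (β, βs)‖
      = ‖M (α, αs) (γ, γs)‖ * ‖M' (γ, γs) (β, βs)‖ := norm_mul _ _
    _ ≤ (C₁ * (x1 ^ (n₁+m))⁻¹ * (y1 ^ (n₂+m+Nq))⁻¹ * u1 ^ p) *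
        (C₂ * (x2 ^ (n₁+m))⁻¹ * (y2 ^ (n₂+m+Np))⁻¹ * u2 ^ q) := by
        apply mul_le_mul B1 B2 (norm_nonneg _)
        have h1 : (0:ℝ) ≤ u1 ^ p := Real.rpow_nonneg (jap_nonneg _) p
        have h2 : (0:ℝ) ≤ (x1 ^ (n₁+m))⁻¹ := inv_nonneg.mpr (pow_pos hx1p _).le
        have h3 : (0:ℝ) ≤ (y1 ^ (n₂+m+Nq))⁻¹ := inv_nonneg.mpr (pow_pos hy1p _).le
        exact mul_nonneg (mul_nonneg (mul_nonneg hC₁.le h2) h3) h1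
    _ = (C₁ * C₂) * ((x1 ^ n₁ * x2 ^ n₁)⁻¹ * ((y1 ^ n₂ * y2 ^ n₂)⁻¹ *
          (((y1 ^ Nq)⁻¹ * u2 ^ q) * (((y2 ^ Np)⁻¹ * u1 ^ p) *
          (((x1 ^ m)⁻¹ * (x2 ^ m)⁻¹) * ((y1 ^ m)⁻¹ * (y2 ^ m)⁻¹)))))) := by
        rw [pow_add x1, pow_add x2, pow_add y1, pow_add y1, pow_add y2, pow_add y2,
          mul_inv, mul_inv, mul_inv, mul_inv, mul_inv, mul_inv]
        ring
    _ ≤ (C₁ * C₂) * (((Real.sqrt 2) ^ n₁ * (x0 ^ n₁)⁻¹) * (((Real.sqrt 2) ^ n₂ * (y0 ^ n₂)⁻¹) *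
          (((Real.sqrt 2) ^ |q| * u0 ^ q) * (((Real.sqrt 2) ^ |p| * u0 ^ p) *
          (((jap (zToR (α - γ)) ^ m)⁻¹ * 1) * ((jap (zToR (αs - γs)) ^ m)⁻¹ * 1)))))) := by
        gcongr
    _ = C₁ * C₂ * (Real.sqrt 2) ^ (n₁+n₂) * ((Real.sqrt 2) ^ |p| * (Real.sqrt 2) ^ |q|) *
          (x0 ^ n₁)⁻¹ * (y0 ^ n₂)⁻¹ * u0 ^ (p + q) *
          ((jap (zToR (α - γ)) ^ m)⁻¹ * (jap (zToR (αs - γs)) ^ m)⁻¹) := by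
        rw [Real.rpow_add hu0p, pow_add (Real.sqrt 2)]
        ring


lemma summable_shift (α : Fin d → ℤ) :
    Summable (fun γ : Fin d → ℤ => ((jap (zToR (α - γ))) ^ (2*d))⁻¹) :=
  ((Equiv.subLeft α).summable_iff
    (f := fun c : Fin d → ℤ => ((jap (zToR c)) ^ (2*d))⁻¹)).mpr summable_japZ

end Aux


open Aux in
set_option maxHeartbeats 2000000 in
/-- **Composition of matrices with rapid off-diagonal decay** (Proposition 3.3): if `M` has
rapid off-diagonal decay of order `p` and `M'` of order `q`, then the matrix product
`(M·M')_{aa,bb} = ∑_{cc} M_{aa,cc} M'_{cc,bb}` is given by absolutely convergent series and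
has rapid off-diagonal decay of order `p+q`. -/
theorem rapidDecay_matrix_mul (d : ℕ) (hd : 1 ≤ d) (p q : ℝ)
    (M M' : ((Fin d → ℤ) × (Fin d → ℤ)) → ((Fin d → ℤ) × (Fin d → ℤ)) → ℂ)
    (hM : RapidDecay p M) (hM' : RapidDecay q M') :
    (∀ aa bb : (Fin d → ℤ) × (Fin d → ℤ),
      Summable (fun cc : (Fin d → ℤ) × (Fin d → ℤ) => ‖M aa cc * M' cc bb‖)) ∧
    RapidDecay (p + q)
      (fun aa bb => ∑' cc : (Fin d → ℤ) × (Fin d → ℤ), M aa cc * M' cc bb) := by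
  classical
  -- the universal weight and its sum
  set S : ℝ := ∑' cc : (Fin d → ℤ) × (Fin d → ℤ),
      ((jap (zToR cc.1)) ^ (2*d))⁻¹ * ((jap (zToR cc.2)) ^ (2*d))⁻¹ with hSdef
  have wnonneg : ∀ c : Fin d → ℤ, (0:ℝ) ≤ ((jap (zToR c)) ^ (2*d))⁻¹ :=
    fun c => inv_nonneg.mpr (pow_pos (jap_pos _) _).le
  have hW : ∀ α αs : Fin d → ℤ, Summable (fun cc : (Fin d → ℤ) × (Fin d → ℤ) =>
      ((jap (zToR (α - cc.1))) ^ (2*d))⁻¹ * ((jap (zToR (αs - cc.2))) ^ (2*d))⁻¹) := by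
    intro α αs
    exact Summable.mul_of_nonneg (summable_shift α) (summable_shift αs)
      (fun c => wnonneg _) (fun c => wnonneg _)
  have hWsum : ∀ α αs : Fin d → ℤ,
      (∑' cc : (Fin d → ℤ) × (Fin d → ℤ),
        ((jap (zToR (α - cc.1))) ^ (2*d))⁻¹ * ((jap (zToR (αs - cc.2))) ^ (2*d))⁻¹) = S := by
    intro α αs
    have := ((Equiv.subLeft α).prodCongr (Equiv.subLeft αs)).tsum_eq
      (f := fun cc : (Fin d → ℤ) × (Fin d → ℤ) =>
        ((jap (zToR cc.1)) ^ (2*d))⁻¹ * ((jap (zToR cc.2)) ^ (2*d))⁻¹)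
    exact this
  have hS0 : 0 ≤ S := tsum_nonneg (fun cc => mul_nonneg (wnonneg _) (wnonneg _))
  -- summability of the norms
  have part1 : ∀ aa bb : (Fin d → ℤ) × (Fin d → ℤ),
      Summable (fun cc : (Fin d → ℤ) × (Fin d → ℤ) => ‖M aa cc * M' cc bb‖) := by
    rintro ⟨α, αs⟩ ⟨β, βs⟩
    obtain ⟨C, hC, hkey⟩ := key hM hM' 0 0
    apply Summable.of_nonneg_of_le (fun cc => norm_nonneg _)
      (f := fun cc : (Fin d → ℤ) × (Fin d → ℤ) =>
        (C * jap (dualV αs + dualV βs) ^ (p + q)) *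
          (((jap (zToR (α - cc.1))) ^ (2*d))⁻¹ * ((jap (zToR (αs - cc.2))) ^ (2*d))⁻¹))
    · intro cc
      have h := hkey α αs β βs cc.1 cc.2
      simpa [pow_zero, inv_one, mul_one, one_mul, mul_assoc] using h
    · exact (hW α αs).mul_left _
  refine ⟨part1, ?_⟩
  intro n₁ n₂
  obtain ⟨C, hC, hkey⟩ := key hM hM' n₁ n₂
  refine ⟨C * (S + 1), by positivity, ?_⟩
  intro α αs β βs
  set A : ℝ := (jap (zToR α - zToR β) ^ n₁)⁻¹ * ((jap (dualV αs - dualV βs) ^ n₂)⁻¹ *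
      jap (dualV αs + dualV βs) ^ (p + q)) with hA
  have hA0 : 0 ≤ A := by
    apply mul_nonneg (inv_nonneg.mpr (pow_pos (jap_pos _) _).le)
    exact mul_nonneg (inv_nonneg.mpr (pow_pos (jap_pos _) _).le)
      (Real.rpow_nonneg (jap_nonneg _) _)
  have hbound : ∀ cc : (Fin d → ℤ) × (Fin d → ℤ),
      ‖M (α, αs) cc * M' cc (β, βs)‖ ≤ (C * A) *
        (((jap (zToR (α - cc.1))) ^ (2*d))⁻¹ * ((jap (zToR (αs - cc.2))) ^ (2*d))⁻¹) := by
    intro cc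
    have h := hkey α αs β βs cc.1 cc.2
    calc ‖M (α, αs) cc * M' cc (β, βs)‖
        = ‖M (α, αs) (cc.1, cc.2) * M' (cc.1, cc.2) (β, βs)‖ := by rw [Prod.mk.eta]
      _ ≤ _ := h
      _ = (C * A) * (((jap (zToR (α - cc.1))) ^ (2*d))⁻¹ *
            ((jap (zToR (αs - cc.2))) ^ (2*d))⁻¹) := by rw [hA]; ring
  have hsum1 : Summable (fun cc : (Fin d → ℤ) × (Fin d → ℤ) =>
      ‖M (α, αs) cc * M' cc (β, βs)‖) := part1 (α, αs) (β, βs)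
  calc ‖∑' cc : (Fin d → ℤ) × (Fin d → ℤ), M (α, αs) cc * M' cc (β, βs)‖
      ≤ ∑' cc : (Fin d → ℤ) × (Fin d → ℤ), ‖M (α, αs) cc * M' cc (β, βs)‖ :=
        norm_tsum_le_tsum_norm hsum1
    _ ≤ ∑' cc : (Fin d → ℤ) × (Fin d → ℤ), (C * A) *
          (((jap (zToR (α - cc.1))) ^ (2*d))⁻¹ * ((jap (zToR (αs - cc.2))) ^ (2*d))⁻¹) :=
        hsum1.tsum_le_tsum hbound ((hW α αs).mul_left _)
    _ = (C * A) * S := by rw [tsum_mul_left, hWsum α αs]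
    _ ≤ (C * A) * (S + 1) := by
        apply mul_le_mul_of_nonneg_left (by linarith) (mul_nonneg hC.le hA0)
    _ = C * (S + 1) * (jap (zToR α - zToR β) ^ n₁)⁻¹ * (jap (dualV αs - dualV βs) ^ n₂)⁻¹ *
          jap (dualV αs + dualV βs) ^ (p + q) := by rw [hA]; ring
end
end

section
/- (Stokes phase identity, equation (F-Stokes).) Let A : ℝ^d → ℝ^d be smooth with temperate growth and set B_{jk} := ∂_jA_k − ∂_kA_j. Then for all α, β, x, y ∈ ℝ^d: Λ^A(α,x) Λ^A(x,y) Λ^A(y,β) = Λ^A(α,β) Ω^B(α,x,y) Ω^B(α,y,β). -/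
open MeasureTheory Complex
open scoped BigOperators ComplexConjugate ComplexInnerProductSpace

noncomputable section

namespace StokesAux

variable {d : ℕ} (A : (Fin d → ℝ) → (Fin d → ℝ)) (a b c : Fin d → ℝ)

/-- parametrization of the triangle -/
def uu (t s : ℝ) : Fin d → ℝ := a + t • (b - a) + (s * t) • (c - b)

def GG (t s : ℝ) : ℝ := ∑ i, A (uu a b c t s) i * (t * (c - b) i)

def HH (t s : ℝ) : ℝ := ∑ i, A (uu a b c t s) i * ((b - a) i + s * (c - b) i)

def DtF (t s : ℝ) : ℝ :=
  (∑ i, (fderiv ℝ A (uu a b c t s)) ((b - a) + s • (c - b)) i * (t * (c - b) i))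
    + ∑ i, A (uu a b c t s) i * (c - b) i

def DsF (t s : ℝ) : ℝ :=
  (∑ i, (fderiv ℝ A (uu a b c t s)) (t • (c - b)) i * ((b - a) i + s * (c - b) i))
    + ∑ i, A (uu a b c t s) i * (c - b) i

variable (hA : ContDiff ℝ (⊤ : ℕ∞) A)
include hA

lemma hG (t s : ℝ) : HasDerivAt (fun t' => GG A a b c t' s) (DtF A a b c t s) t := by
  have h1 : HasDerivAt (fun t' : ℝ => t' • (b-a)) (b-a) t := by
    simpa using (hasDerivAt_id t).smul_const (b-a)
  have h2 : HasDerivAt (fun t' : ℝ => (s*t') • (c-b)) (s • (c-b)) t := by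
    simpa using ((hasDerivAt_id t).const_mul s).smul_const (c-b)
  have hu : HasDerivAt (fun t' => uu a b c t' s) ((b - a) + s • (c - b)) t :=
    (h1.const_add a).add h2
  have hAc : HasDerivAt (fun t' => A (uu a b c t' s))
      ((fderiv ℝ A (uu a b c t s)) ((b - a) + s • (c - b))) t :=
    (hA.differentiable (by simp) (uu a b c t s)).hasFDerivAt.comp_hasDerivAt t hu
  have h := HasDerivAt.fun_sum (u := Finset.univ)
    (fun i _ => (hasDerivAt_pi.1 hAc i).mul (hasDerivAt_mul_const ((c-b) i)))
  simpa [GG, DtF, Finset.sum_add_distrib, mul_comm] using h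

lemma hHd (t s : ℝ) : HasDerivAt (fun s' => HH A a b c t s') (DsF A a b c t s) s := by
  have h2 : HasDerivAt (fun s' : ℝ => (s'*t) • (c-b)) (t • (c-b)) s := by
    simpa using ((hasDerivAt_id s).mul_const t).smul_const (c-b)
  have hu : HasDerivAt (fun s' => uu a b c t s') (t • (c - b)) s :=
    h2.const_add (a + t • (b-a))
  have hAc : HasDerivAt (fun s' => A (uu a b c t s'))
      ((fderiv ℝ A (uu a b c t s)) (t • (c - b))) s :=
    (hA.differentiable (by simp) (uu a b c t s)).hasFDerivAt.comp_hasDerivAt s hu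
  have h := HasDerivAt.fun_sum (u := Finset.univ)
    (fun i _ => (hasDerivAt_pi.1 hAc i).mul
      (((hasDerivAt_id s).mul_const ((c-b) i)).const_add ((b-a) i)))
  simpa [HH, DsF, Finset.sum_add_distrib, mul_comm] using h

omit hA

lemma key (p w z : Fin d → ℝ) :
    ∑ k, (fderiv ℝ A p) w k * z k
      = ∑ j, ∑ k, w j * ((fderiv ℝ A p) (Pi.single j 1) k * z k) := by
  have hw : (fderiv ℝ A p) w = ∑ j, w j • (fderiv ℝ A p) (Pi.single j 1) := by
    conv_lhs => rw [show w = ∑ j, w j • (Pi.single j 1 : Fin d → ℝ) by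
      ext k; simp [Pi.single_apply]]
    rw [map_sum]
    exact Finset.sum_congr rfl fun j _ => (fderiv ℝ A p).map_smul _ _
  rw [hw, Finset.sum_comm]
  refine Finset.sum_congr rfl fun k _ => ?_
  simp [Finset.sum_apply, Finset.sum_mul, mul_assoc]


lemma hI (t s : ℝ) :
    (∑ j, ∑ k, Bof A j k (a + t • (b - a) + (s * t) • (c - b)) *
      ((b - a) j + s * (c - b) j) * (t * (c - b) k))
      = DtF A a b c t s - DsF A a b c t s := by
  have h1 := key A (uu a b c t s) ((b - a) + s • (c - b)) (fun k => t * (c - b) k)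
  have h2 := key A (uu a b c t s) (t • (c - b)) (fun k => (b - a) k + s * (c - b) k)
  simp only [DtF, DsF, Pi.add_apply, Pi.smul_apply, smul_eq_mul] at h1 h2 ⊢
  rw [h1, h2]
  rw [show ∀ X Y S : ℝ, (X + S) - (Y + S) = X - Y from fun X Y S => by ring]
  rw [Finset.sum_comm (γ := Fin d) (s := Finset.univ) (t := Finset.univ)
    (f := fun j k => (t * (c - b) j) * ((fderiv ℝ A (uu a b c t s)) (Pi.single j 1) k
      * ((b - a) k + s * (c - b) k)))]
  simp only [← Finset.sum_sub_distrib]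
  refine Finset.sum_congr rfl fun j _ => ?_
  refine Finset.sum_congr rfl fun k _ => ?_
  simp only [Bof, uu]
  ring

lemma ucont : Continuous fun p : ℝ × ℝ => uu a b c p.1 p.2 := by
  unfold uu; fun_prop

lemma AC (hA : ContDiff ℝ (⊤ : ℕ∞) A) :
    Continuous fun p : ℝ × ℝ => A (uu a b c p.1 p.2) :=
  hA.continuous.comp (ucont a b c)

lemma DtC (hA : ContDiff ℝ (⊤ : ℕ∞) A) :
    Continuous fun p : ℝ × ℝ => DtF A a b c p.1 p.2 := by
  have hfd : Continuous fun p : ℝ × ℝ => fderiv ℝ A (uu a b c p.1 p.2) :=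
    (hA.continuous_fderiv (by simp)).comp (ucont a b c)
  have hv : Continuous fun p : ℝ × ℝ => (b - a) + p.2 • (c - b) := by fun_prop
  unfold DtF
  refine Continuous.add (continuous_finset_sum _ fun i _ => ?_)
    (continuous_finset_sum _ fun i _ => ?_)
  · exact ((continuous_apply i).comp (hfd.clm_apply hv)).mul
      (continuous_fst.mul continuous_const)
  · exact ((continuous_apply i).comp (AC A a b c hA)).mul continuous_const

lemma DsC (hA : ContDiff ℝ (⊤ : ℕ∞) A) :
    Continuous fun p : ℝ × ℝ => DsF A a b c p.1 p.2 := by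
  have hfd : Continuous fun p : ℝ × ℝ => fderiv ℝ A (uu a b c p.1 p.2) :=
    (hA.continuous_fderiv (by simp)).comp (ucont a b c)
  have hv : Continuous fun p : ℝ × ℝ => p.1 • (c - b) := by fun_prop
  unfold DsF
  refine Continuous.add (continuous_finset_sum _ fun i _ => ?_)
    (continuous_finset_sum _ fun i _ => ?_)
  · exact ((continuous_apply i).comp (hfd.clm_apply hv)).mul
      (continuous_const.add (continuous_snd.mul continuous_const))
  · exact ((continuous_apply i).comp (AC A a b c hA)).mul continuous_const

lemma HHC (hA : ContDiff ℝ (⊤ : ℕ∞) A) :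
    Continuous fun p : ℝ × ℝ => HH A a b c p.1 p.2 := by
  unfold HH
  refine continuous_finset_sum _ fun i _ => ?_
  exact ((continuous_apply i).comp (AC A a b c hA)).mul
    (continuous_const.add (continuous_snd.mul continuous_const))

lemma flux_eq (hA : ContDiff ℝ (⊤ : ℕ∞) A) :
    fluxB (Bof A) a b c =
      (∫ t in (0:ℝ)..1, dotR (A (a + t • (b - a))) (b - a))
      + (∫ t in (0:ℝ)..1, dotR (A (b + t • (c - b))) (c - b))
      - (∫ t in (0:ℝ)..1, dotR (A (a + t • (c - a))) (c - a)) := by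
  have step1 : fluxB (Bof A) a b c
      = ∫ t in (0:ℝ)..1, ∫ s in (0:ℝ)..1, (DtF A a b c t s - DsF A a b c t s) := by
    unfold fluxB
    simp only [hI A a b c]
  have hDt_s : ∀ t : ℝ, Continuous fun s => DtF A a b c t s := fun t => by
    simpa [Function.comp_def] using (DtC A a b c hA).comp (Continuous.prodMk_right t)
  have hDs_s : ∀ t : ℝ, Continuous fun s => DsF A a b c t s := fun t => by
    simpa [Function.comp_def] using (DsC A a b c hA).comp (Continuous.prodMk_right t)
  have hDt_t : ∀ s : ℝ, Continuous fun t => DtF A a b c t s := fun s => by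
    simpa [Function.comp_def] using (DtC A a b c hA).comp
      (continuous_id.prodMk (continuous_const : Continuous fun _ : ℝ => s))
  have step2 : ∀ t : ℝ, (∫ s in (0:ℝ)..1, (DtF A a b c t s - DsF A a b c t s))
      = (∫ s in (0:ℝ)..1, DtF A a b c t s) - (HH A a b c t 1 - HH A a b c t 0) := by
    intro t
    rw [intervalIntegral.integral_sub ((hDt_s t).intervalIntegrable 0 1)
      ((hDs_s t).intervalIntegrable 0 1)]
    rw [intervalIntegral.integral_eq_sub_of_hasDerivAt
      (fun s _ => hHd A a b c hA t s) ((hDs_s t).intervalIntegrable 0 1)]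
  have hswap : (∫ t in (0:ℝ)..1, ∫ s in (0:ℝ)..1, DtF A a b c t s)
      = ∫ s in (0:ℝ)..1, ∫ t in (0:ℝ)..1, DtF A a b c t s := by
    simp_rw [intervalIntegral.integral_of_le (zero_le_one (α := ℝ))]
    refine MeasureTheory.integral_integral_swap ?_
    rw [Measure.prod_restrict]
    refine (((DtC A a b c hA).continuousOn).integrableOn_compact
      (isCompact_Icc.prod isCompact_Icc)).mono_set
      (Set.prod_mono Set.Ioc_subset_Icc_self Set.Ioc_subset_Icc_self)
  have hftc_t : ∀ s : ℝ, (∫ t in (0:ℝ)..1, DtF A a b c t s)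
      = GG A a b c 1 s - GG A a b c 0 s := fun s =>
    intervalIntegral.integral_eq_sub_of_hasDerivAt
      (fun t _ => hG A a b c hA t s) ((hDt_t s).intervalIntegrable 0 1)
  have hGG0 : ∀ s : ℝ, GG A a b c 0 s = 0 := by intro s; simp [GG]
  have hGG1 : ∀ s : ℝ, GG A a b c 1 s = dotR (A (b + s • (c - b))) (c - b) := by
    intro s
    have hpt : uu a b c 1 s = b + s • (c - b) := by
      unfold uu; ext i; simp; try ring
    rw [GG, hpt, dotR]
    exact Finset.sum_congr rfl fun i _ => by ring
  have hHH1 : ∀ t : ℝ, HH A a b c t 1 = dotR (A (a + t • (c - a))) (c - a) := by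
    intro t
    have hpt : uu a b c t 1 = a + t • (c - a) := by
      unfold uu; ext i; simp; try ring
    rw [HH, hpt, dotR]
    refine Finset.sum_congr rfl fun i _ => ?_
    simp only [Pi.sub_apply]; ring
  have hHH0 : ∀ t : ℝ, HH A a b c t 0 = dotR (A (a + t • (b - a))) (b - a) := by
    intro t
    have hpt : uu a b c t 0 = a + t • (b - a) := by
      unfold uu; ext i; simp
    rw [HH, hpt, dotR]
    refine Finset.sum_congr rfl fun i _ => ?_
    simp only [Pi.sub_apply]; ring
  have hunc : Continuous (Function.uncurry fun t s => DtF A a b c t s) := by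
    simpa [Function.uncurry_def] using DtC A a b c hA
  have hcont1 : Continuous fun t : ℝ => ∫ s in (0:ℝ)..1, DtF A a b c t s :=
    intervalIntegral.continuous_parametric_intervalIntegral_of_continuous' hunc 0 1
  have hcontH1 : Continuous fun t : ℝ => HH A a b c t 1 := by
    simpa [Function.comp_def] using (HHC A a b c hA).comp
      (continuous_id.prodMk (continuous_const : Continuous fun _ : ℝ => (1:ℝ)))
  have hcontH0 : Continuous fun t : ℝ => HH A a b c t 0 := by
    simpa [Function.comp_def] using (HHC A a b c hA).comp
      (continuous_id.prodMk (continuous_const : Continuous fun _ : ℝ => (0:ℝ)))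
  rw [step1]
  calc ∫ t in (0:ℝ)..1, ∫ s in (0:ℝ)..1, (DtF A a b c t s - DsF A a b c t s)
      = ∫ t in (0:ℝ)..1,
          ((∫ s in (0:ℝ)..1, DtF A a b c t s) - (HH A a b c t 1 - HH A a b c t 0)) := by
        exact intervalIntegral.integral_congr fun t _ => step2 t
    _ = (∫ t in (0:ℝ)..1, ∫ s in (0:ℝ)..1, DtF A a b c t s)
          - ((∫ t in (0:ℝ)..1, HH A a b c t 1) - ∫ t in (0:ℝ)..1, HH A a b c t 0) := by
        rw [intervalIntegral.integral_sub (hcont1.intervalIntegrable 0 1)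
          ((hcontH1.fun_sub hcontH0).intervalIntegrable 0 1),
          intervalIntegral.integral_sub (hcontH1.intervalIntegrable 0 1)
          (hcontH0.intervalIntegrable 0 1)]
    _ = (∫ s in (0:ℝ)..1, dotR (A (b + s • (c - b))) (c - b))
          - ((∫ t in (0:ℝ)..1, dotR (A (a + t • (c - a))) (c - a))
            - ∫ t in (0:ℝ)..1, dotR (A (a + t • (b - a))) (b - a)) := by
        rw [hswap]
        congr 1
        · refine intervalIntegral.integral_congr fun s _ => ?_
          rw [hftc_t s, hGG0 s, hGG1 s, sub_zero]
        · congr 1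
          · exact intervalIntegral.integral_congr fun t _ => hHH1 t
          · exact intervalIntegral.integral_congr fun t _ => hHH0 t
    _ = _ := by ring

end StokesAux

/-- **Stokes phase identity** (equation (F-Stokes)): for a smooth vector potential `A` of
temperate growth and `B = dA`, the product of the three edge phases of the triangles
`⟨α,x,y⟩` and `⟨α,y,β⟩` recombines as
`Λ^A(α,x) Λ^A(x,y) Λ^A(y,β) = Λ^A(α,β) Ω^B(α,x,y) Ω^B(α,y,β)`. -/
theorem stokes_phase_identity (d : ℕ) (hd : 1 ≤ d)
    (A : (Fin d → ℝ) → (Fin d → ℝ)) (hA : Function.HasTemperateGrowth A)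
    (α β x y : Fin d → ℝ) :
    magPhase A α x * magPhase A x y * magPhase A y β =
      magPhase A α β * OmegaB (Bof A) α x y * OmegaB (Bof A) α y β := by
  have hA1 : ContDiff ℝ (⊤ : ℕ∞) A := hA.1
  unfold magPhase OmegaB
  rw [StokesAux.flux_eq A α x y hA1, StokesAux.flux_eq A α y β hA1]
  rw [← Complex.exp_add, ← Complex.exp_add, ← Complex.exp_add, ← Complex.exp_add]
  congr 1
  push_cast
  ring
end
end

section
/- (Derivative estimates for the magnetic flux phase, equation (E-OmegaB).) Let B_{jk} : ℝ^d → ℝ (1 ≤ j,k ≤ d) be smooth with B_{jk} = −B_{kj}, each bounded together with all its partial derivatives. Then for every pair of multi-indices a, b there exists a constant C_{a,b} > 0, depending only on d, a, b and finitely many of the bounds sup|∂^c B_{jk}|, such that for all α, x, y ∈ ℝ^d: |∂_x^a ∂_y^b Ω^B(α,x,y)| ≤ C_{a,b} ⟨x−α⟩^{|a|+|b|} ⟨x−y⟩^{|a|+|b|}. -/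
open MeasureTheory Complex
open scoped BigOperators ComplexConjugate ComplexInnerProductSpace

noncomputable section

section DListBasic

variable {E F : Type*} [NormedAddCommGroup E] [NormedSpace ℝ E]
  [NormedAddCommGroup F] [NormedSpace ℝ F]

@[simp] lemma dList_nil (f : E → F) : dList [] f = f := rfl

lemma dList_cons (v : E) (L : List E) (f : E → F) :
    dList (v :: L) f = fun x => fderiv ℝ (dList L f) x v := rfl

lemma dList_append (L₁ L₂ : List E) (f : E → F) :
    dList (L₁ ++ L₂) f = dList L₁ (dList L₂ f) := by
  induction L₁ with
  | nil => simp
  | cons v L ih => simp [dList_cons, ih]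

/-- all iterated directional derivatives are differentiable -/
def DSm (f : E → F) : Prop := ∀ L : List E, Differentiable ℝ (dList L f)

lemma DSm.diff {f : E → F} (h : DSm f) : Differentiable ℝ f := h []

lemma DSm.dList {f : E → F} (h : DSm f) (L : List E) : DSm (dList L f) :=
  fun M => by rw [← dList_append]; exact h _

lemma ContDiff.dList_contDiff {f : E → F} (hf : ContDiff ℝ (⊤ : ℕ∞) f) (L : List E) :
    ContDiff ℝ (⊤ : ℕ∞) (dList L f) := by
  induction L with
  | nil => exact hf
  | cons v L ih =>
    rw [dList_cons]
    exact (ContinuousLinearMap.apply ℝ F v).contDiff.comp (ih.fderiv_right (by simp))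

lemma ContDiff.dsm {f : E → F} (hf : ContDiff ℝ (⊤ : ℕ∞) f) : DSm f :=
  fun L => (hf.dList_contDiff L).differentiable (by simp)

lemma dList_const (c : F) (v : E) (L : List E) :
    dList (v :: L) (fun _ : E => c) = fun _ => 0 := by
  induction L generalizing v with
  | nil => funext x; simp [dList_cons, fderiv_const]
  | cons w M ih =>
    funext x
    rw [dList_cons, ih w]
    simp

lemma dList_zero (L : List E) (hL : L ≠ []) :
    dList L (fun _ : E => (0 : F)) = fun _ => 0 := by
  cases L with
  | nil => exact absurd rfl hL
  | cons v L => exact dList_const 0 v L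

end DListBasic

section DListAlg

variable {E F : Type*} [NormedAddCommGroup E] [NormedSpace ℝ E]
  [NormedAddCommGroup F] [NormedSpace ℝ F]

lemma dList_add {f g : E → F} (hf : DSm f) (hg : DSm g) (L : List E) :
    dList L (fun x => f x + g x) = fun x => dList L f x + dList L g x := by
  induction L with
  | nil => rfl
  | cons v M ih =>
    funext x
    simp only [dList_cons, ih]
    rw [fderiv_fun_add (hf M x) (hg M x)]
    simp

lemma DSm.add {f g : E → F} (hf : DSm f) (hg : DSm g) :
    DSm (fun x => f x + g x) := by
  intro L
  rw [dList_add hf hg]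
  exact (hf L).add (hg L)

lemma dList_smul (c : ℝ) {f : E → F} (hf : DSm f) (L : List E) :
    dList L (fun x => c • f x) = fun x => c • dList L f x := by
  induction L with
  | nil => rfl
  | cons v M ih =>
    funext x
    simp only [dList_cons, ih]
    rw [fderiv_fun_const_smul (hf M x)]
    simp

lemma DSm.smul (c : ℝ) {f : E → F} (hf : DSm f) : DSm (fun x => c • f x) := by
  intro L
  rw [dList_smul c hf]
  exact (hf L).const_smul c

lemma DSm.finsetSum {ι : Type*} (s : Finset ι) {g : ι → E → F}
    (hg : ∀ i ∈ s, DSm (g i)) : DSm (fun x => ∑ i ∈ s, g i x) := by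
  classical
  induction s using Finset.induction_on with
  | empty =>
    intro L
    simp only [Finset.sum_empty]
    cases L with
    | nil => exact differentiable_const 0
    | cons v M =>
      rw [dList_const (0:F) v M]
      exact differentiable_const 0
  | insert _ _ hnot ih =>
    rename_i a s
    intro L
    have h1 : DSm (g a) := hg a (Finset.mem_insert_self a s)
    have h2 : DSm (fun x => ∑ i ∈ s, g i x) :=
      ih (fun i hi => hg i (Finset.mem_insert_of_mem hi))
    have : (fun x => ∑ i ∈ insert a s, g i x)
        = fun x => g a x + ∑ i ∈ s, g i x := by
      funext x; rw [Finset.sum_insert hnot]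
    rw [this]
    exact (h1.add h2) L

lemma dList_finsetSum {ι : Type*} (s : Finset ι) {g : ι → E → F}
    (hg : ∀ i ∈ s, DSm (g i)) (L : List E) :
    dList L (fun x => ∑ i ∈ s, g i x) = fun x => ∑ i ∈ s, dList L (g i) x := by
  classical
  induction s using Finset.induction_on with
  | empty =>
    simp only [Finset.sum_empty]
    cases L with
    | nil => rfl
    | cons v M => rw [dList_const (0:F) v M]
  | insert _ _ hnot ih =>
    rename_i a s
    have h1 : DSm (g a) := hg a (Finset.mem_insert_self a s)
    have h2 : ∀ i ∈ s, DSm (g i) := fun i hi => hg i (Finset.mem_insert_of_mem hi)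
    have hs : DSm (fun x => ∑ i ∈ s, g i x) := DSm.finsetSum s h2
    have : (fun x => ∑ i ∈ insert a s, g i x)
        = fun x => g a x + ∑ i ∈ s, g i x := by
      funext x; rw [Finset.sum_insert hnot]
    rw [this, dList_add h1 hs, ih h2]
    funext x
    rw [Finset.sum_insert hnot]

/-- post-composition with a continuous linear map -/
lemma dList_clm_comp {G : Type*} [NormedAddCommGroup G] [NormedSpace ℝ G]
    (T : F →L[ℝ] G) {f : E → F} (hf : DSm f) (L : List E) :
    dList L (fun x => T (f x)) = fun x => T (dList L f x) := by
  induction L with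
  | nil => rfl
  | cons v M ih =>
    funext x
    simp only [dList_cons, ih]
    have h2 : fderiv ℝ (fun x => T (dList M f x)) x
        = T.comp (fderiv ℝ (dList M f) x) :=
      (T.hasFDerivAt.comp x (hf M x).hasFDerivAt).fderiv
    rw [h2]
    simp

lemma DSm.clm_comp {G : Type*} [NormedAddCommGroup G] [NormedSpace ℝ G]
    (T : F →L[ℝ] G) {f : E → F} (hf : DSm f) : DSm (fun x => T (f x)) := by
  intro L
  rw [dList_clm_comp T hf]
  exact (T.differentiable.comp (hf L))

end DListAlg

section Leibniz

variable {E : Type*} [NormedAddCommGroup E] [NormedSpace ℝ E]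

/-- all order-preserving splittings of a list into two sublists -/
def splits {α : Type*} : List α → List (List α × List α)
  | [] => [([], [])]
  | v :: L => (splits L).flatMap (fun p => [(v :: p.1, p.2), (p.1, v :: p.2)])

lemma splits_cons {α : Type*} (v : α) (L : List α) :
    splits (v :: L) = (splits L).flatMap (fun p => [(v :: p.1, p.2), (p.1, v :: p.2)]) := rfl

lemma sum_flatMap_pair {α β : Type*} [AddCommMonoid β] (l : List α) (f g : α → β) :
    ((l.flatMap (fun a => [f a, g a])).sum) = (l.map (fun a => f a + g a)).sum := by
  induction l with
  | nil => simp
  | cons a l ih => simp [List.flatMap_cons, ih, add_assoc]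

lemma list_sum_le_sum {ι : Type*} (l : List ι) (φ ψ : ι → ℝ)
    (h : ∀ i ∈ l, φ i ≤ ψ i) : (l.map φ).sum ≤ (l.map ψ).sum := by
  induction l with
  | nil => simp
  | cons a l ih =>
    simp only [List.map_cons, List.sum_cons]
    have h1 := h a List.mem_cons_self
    have h2 := ih (fun i hi => h i (List.mem_cons_of_mem a hi))
    linarith

variable {F : Type*} [NormedAddCommGroup F] [NormedSpace ℝ F]

lemma differentiable_list_sum {ι : Type*} (l : List ι) (φ : ι → E → F)
    (h : ∀ i ∈ l, Differentiable ℝ (φ i)) :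
    Differentiable ℝ (fun x => (l.map (fun i => φ i x)).sum) := by
  induction l with
  | nil => simp only [List.map_nil, List.sum_nil]; exact differentiable_const (0 : F)
  | cons a l ih =>
    simp only [List.map_cons, List.sum_cons]
    exact (h a List.mem_cons_self).add
      (ih (fun i hi => h i (List.mem_cons_of_mem a hi)))

lemma fderiv_list_sum {ι : Type*} (l : List ι) (φ : ι → E → F)
    (h : ∀ i ∈ l, Differentiable ℝ (φ i)) (x : E) (v : E) :
    fderiv ℝ (fun x => (l.map (fun i => φ i x)).sum) x v
      = (l.map (fun i => fderiv ℝ (φ i) x v)).sum := by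
  induction l with
  | nil => simp
  | cons a l ih =>
    simp only [List.map_cons, List.sum_cons]
    rw [fderiv_fun_add ((h a List.mem_cons_self) x)
      ((differentiable_list_sum l φ (fun i hi => h i (List.mem_cons_of_mem a hi))) x)]
    simp only [ContinuousLinearMap.add_apply]
    rw [ih (fun i hi => h i (List.mem_cons_of_mem a hi))]

lemma norm_list_sum_le {ι : Type*} (l : List ι) (φ : ι → F) :
    ‖(l.map φ).sum‖ ≤ (l.map (fun i => ‖φ i‖)).sum := by
  induction l with
  | nil => simp
  | cons a l ih =>
    simp only [List.map_cons, List.sum_cons]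
    exact (norm_add_le _ _).trans (by linarith)

variable {𝔸 : Type*} [NormedCommRing 𝔸] [NormedAlgebra ℝ 𝔸]

lemma dList_mul {f g : E → 𝔸} (hf : DSm f) (hg : DSm g) (L : List E) :
    dList L (fun x => f x * g x)
      = fun x => ((splits L).map (fun p => dList p.1 f x * dList p.2 g x)).sum := by
  induction L with
  | nil => simp [splits]
  | cons v M ih =>
    funext x
    simp only [dList_cons, ih]
    rw [fderiv_list_sum (splits M)
      (fun p => fun x => dList p.1 f x * dList p.2 g x)
      (fun p _ => (hf p.1).mul (hg p.2)) x v]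
    have hterm : ∀ p ∈ splits M,
        fderiv ℝ (fun x => dList p.1 f x * dList p.2 g x) x v
          = dList (v :: p.1) f x * dList p.2 g x + dList p.1 f x * dList (v :: p.2) g x := by
      intro p _
      rw [fderiv_fun_mul ((hf p.1) x) ((hg p.2) x)]
      simp only [ContinuousLinearMap.add_apply, ContinuousLinearMap.smul_apply,
        smul_eq_mul, dList_cons]
      ring
    rw [List.map_congr_left hterm]
    rw [splits_cons, List.map_flatMap]
    rw [show (fun p : List E × List E =>
        [(v :: p.1, p.2), (p.1, v :: p.2)].map
          (fun q : List E × List E => dList q.1 f x * dList q.2 g x))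
      = (fun p : List E × List E =>
        [dList (v :: p.1) f x * dList p.2 g x, dList p.1 f x * dList (v :: p.2) g x]) from rfl]
    rw [sum_flatMap_pair]

lemma DSm.mul {f g : E → 𝔸} (hf : DSm f) (hg : DSm g) :
    DSm (fun x => f x * g x) := by
  intro L
  rw [dList_mul hf hg]
  exact differentiable_list_sum _ _ (fun p _ => (hf p.1).mul (hg p.2))

lemma norm_dList_mul_le {f g : E → 𝔸} (hf : DSm f) (hg : DSm g) (L : List E) (x : E) :
    ‖dList L (fun x => f x * g x) x‖
      ≤ ((splits L).map (fun p => ‖dList p.1 f x‖ * ‖dList p.2 g x‖)).sum := by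
  rw [dList_mul hf hg]
  refine (norm_list_sum_le _ _).trans ?_
  exact list_sum_le_sum _ _ _ (fun p _ => norm_mul_le _ _)

end Leibniz

section Affine

variable {E F V : Type*} [NormedAddCommGroup E] [NormedSpace ℝ E]
  [NormedAddCommGroup F] [NormedSpace ℝ F]
  [NormedAddCommGroup V] [NormedSpace ℝ V]

lemma dList_comp_affine {f : V → F} (hf : DSm f) (T : E →L[ℝ] V) (c : V) (M : List E) :
    dList M (fun z => f (c + T z)) = fun z => dList (M.map (T : E → V)) f (c + T z) := by
  induction M with
  | nil => rfl
  | cons v M ih =>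
    funext z
    simp only [dList_cons, ih, List.map_cons]
    have h : HasFDerivAt (fun z : E => dList (M.map (T : E → V)) f (c + T z))
        ((fderiv ℝ (dList (M.map (T : E → V)) f) (c + T z)).comp T) z :=
      ((hf (M.map (T : E → V)) (c + T z)).hasFDerivAt).comp z (T.hasFDerivAt.const_add c)
    rw [h.fderiv]
    rfl

lemma DSm.comp_affine {f : V → F} (hf : DSm f) (T : E →L[ℝ] V) (c : V) :
    DSm (fun z => f (c + T z)) := by
  intro M
  rw [dList_comp_affine hf T c]
  intro z
  exact ((hf (M.map (T : E → V)) (c + T z)).hasFDerivAt.comp z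
    (T.hasFDerivAt.const_add c)).differentiableAt

lemma dList_affine_single (T : E →L[ℝ] F) (c : F) (v : E) :
    dList [v] (fun z : E => c + T z) = fun _ => T v := by
  funext z
  simp only [dList_cons, dList_nil]
  rw [fderiv_const_add, T.fderiv]

lemma dList_affine_cons₂ (T : E →L[ℝ] F) (c : F) (v w : E) (M : List E) :
    dList (v :: w :: M) (fun z : E => c + T z) = fun _ => 0 := by
  induction M generalizing v w with
  | nil =>
    funext z
    rw [dList_cons, dList_affine_single T c w]
    simp
  | cons u M ih =>
    funext z
    rw [dList_cons, ih w u]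
    simp

lemma DSm.affine (T : E →L[ℝ] F) (c : F) : DSm (fun z : E => c + T z) :=
  ((contDiff_const.add T.contDiff) : ContDiff ℝ (⊤ : ℕ∞) _).dsm

end Affine

section Multilinear

variable {d : ℕ} {F : Type*} [NormedAddCommGroup F] [NormedSpace ℝ F]

lemma pi_expand (v : Fin d → ℝ) :
    v = ∑ i, v i • (Pi.single i (1:ℝ) : Fin d → ℝ) := by
  funext j
  simp only [Finset.sum_apply, Pi.smul_apply, Pi.single_apply, smul_eq_mul,
    mul_ite, mul_one, mul_zero]
  rw [Finset.sum_ite_eq Finset.univ j (fun i => v i)]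
  simp

lemma fderiv_pi_expand {g : (Fin d → ℝ) → F} {y : Fin d → ℝ}
    (hg : DifferentiableAt ℝ g y) (v : Fin d → ℝ) :
    fderiv ℝ g y v
      = ∑ i, v i • fderiv ℝ g y (Pi.single i 1) := by
  conv_lhs => rw [pi_expand v]
  rw [map_sum]
  exact Finset.sum_congr rfl (fun i _ => by rw [_root_.map_smul])

lemma dList_norm_le_of_basis (hd : 1 ≤ d) {f : (Fin d → ℝ) → ℝ} (hf : DSm f)
    (vs : List (Fin d → ℝ)) (C : ℝ)
    (hC : ∀ L : List (Fin d), L.length = vs.length →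
      ∀ y, ‖dList (L.map (fun i => (Pi.single i (1:ℝ) : Fin d → ℝ))) f y‖ ≤ C)
    (y : Fin d → ℝ) :
    ‖dList vs f y‖ ≤ C * (vs.map (fun v => (d:ℝ) * ‖v‖)).prod := by
  induction vs using List.reverseRecOn generalizing f with
  | nil => simpa using hC [] rfl y
  | append_singleton vs' v ih =>
    have hC0 : 0 ≤ C := by
      have := hC (List.replicate (vs' ++ [v]).length ⟨0, hd⟩) (by simp) y
      exact (norm_nonneg _).trans this
    have hprod0 : (0:ℝ) ≤ (vs'.map (fun v => (d:ℝ) * ‖v‖)).prod := by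
      apply List.prod_nonneg
      intro a ha
      simp only [List.mem_map] at ha
      obtain ⟨w, _, rfl⟩ := ha
      positivity
    rw [dList_append]
    have hexp : dList [v] f
        = fun y => ∑ i, v i • dList [(Pi.single i (1:ℝ) : Fin d → ℝ)] f y := by
      funext y
      exact fderiv_pi_expand (hf [] y) v
    rw [hexp]
    have hDSmi : ∀ i : Fin d,
        DSm (fun y => v i • dList [(Pi.single i (1:ℝ) : Fin d → ℝ)] f y) :=
      fun i => (hf.dList [Pi.single i 1]).smul (v i)
    rw [dList_finsetSum Finset.univ (fun i _ => hDSmi i) vs']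
    have hterm : ∀ i : Fin d,
        ‖dList vs' (fun y => v i • dList [(Pi.single i (1:ℝ) : Fin d → ℝ)] f y) y‖
          ≤ ‖v‖ * (C * (vs'.map (fun v => (d:ℝ) * ‖v‖)).prod) := by
      intro i
      rw [dList_smul (v i) (hf.dList [Pi.single i 1]) vs']
      rw [norm_smul]
      have h1 : ‖v i‖ ≤ ‖v‖ := norm_le_pi_norm v i
      have h2 : ‖dList vs' (dList [(Pi.single i (1:ℝ) : Fin d → ℝ)] f) y‖
          ≤ C * (vs'.map (fun v => (d:ℝ) * ‖v‖)).prod := by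
        apply ih (hf.dList [Pi.single i 1])
        intro L hL y'
        rw [← dList_append]
        have heq : L.map (fun i => (Pi.single i (1:ℝ) : Fin d → ℝ))
              ++ [(Pi.single i (1:ℝ) : Fin d → ℝ)]
            = (L ++ [i]).map (fun i => (Pi.single i (1:ℝ) : Fin d → ℝ)) := by simp
        rw [heq]
        exact hC (L ++ [i]) (by simp [hL]) y'
      exact mul_le_mul h1 h2 (norm_nonneg _) (norm_nonneg _)
    show ‖∑ i, dList vs' (fun y => v i • dList [(Pi.single i (1:ℝ) : Fin d → ℝ)] f y) y‖
        ≤ _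
    calc ‖∑ i, dList vs' (fun y => v i • dList [(Pi.single i (1:ℝ) : Fin d → ℝ)] f y) y‖
        ≤ ∑ i : Fin d,
          ‖dList vs' (fun y => v i • dList [(Pi.single i (1:ℝ) : Fin d → ℝ)] f y) y‖ :=
          norm_sum_le _ _
      _ ≤ ∑ _i : Fin d, ‖v‖ * (C * (vs'.map (fun v => (d:ℝ) * ‖v‖)).prod) :=
          Finset.sum_le_sum (fun i _ => hterm i)
      _ = (d : ℝ) * ‖v‖ * (C * (vs'.map (fun v => (d:ℝ) * ‖v‖)).prod) := by
          rw [Finset.sum_const]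
          simp only [Finset.card_univ, Fintype.card_fin, nsmul_eq_mul]
          ring
      _ ≤ C * ((vs' ++ [v]).map (fun v => (d:ℝ) * ‖v‖)).prod := by
          rw [List.map_append, List.prod_append]
          simp only [List.map_cons, List.map_nil, List.prod_cons, List.prod_nil, mul_one]
          nlinarith [norm_nonneg v, hC0, hprod0]

end Multilinear

section Jap

lemma dotR_nonneg {d : ℕ} (x : Fin d → ℝ) : 0 ≤ dotR x x :=
  Finset.sum_nonneg (fun i _ => mul_self_nonneg (x i))

lemma jap_nonneg {d : ℕ} (x : Fin d → ℝ) : 0 ≤ jap x := Real.sqrt_nonneg _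

lemma one_le_jap {d : ℕ} (x : Fin d → ℝ) : 1 ≤ jap x := by
  rw [jap, show (1:ℝ) = Real.sqrt 1 from (Real.sqrt_one).symm]
  apply Real.sqrt_le_sqrt
  rw [Real.sqrt_one]
  have := dotR_nonneg x
  linarith

lemma abs_apply_le_jap {d : ℕ} (x : Fin d → ℝ) (i : Fin d) : |x i| ≤ jap x := by
  rw [jap, ← Real.sqrt_mul_self_eq_abs]
  apply Real.sqrt_le_sqrt
  have : x i * x i ≤ dotR x x :=
    Finset.single_le_sum (fun j _ => mul_self_nonneg (x j)) (Finset.mem_univ i)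
  linarith

end Jap

section Param

open MeasureTheory

/-- product of Lebesgue measure restricted to `(0,1]²` -/
def pmeas : Measure (ℝ × ℝ) :=
  (volume.restrict (Set.Ioc (0:ℝ) 1)).prod (volume.restrict (Set.Ioc (0:ℝ) 1))

instance : IsFiniteMeasure (volume.restrict (Set.Ioc (0:ℝ) 1)) := by
  constructor
  rw [Measure.restrict_apply_univ]
  simp [Real.volume_Ioc]

instance : IsFiniteMeasure pmeas := by unfold pmeas; infer_instance

lemma pmeas_eq : pmeas = (volume : Measure (ℝ × ℝ)).restrict
    (Set.Ioc (0:ℝ) 1 ×ˢ Set.Ioc (0:ℝ) 1) := by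
  rw [pmeas, Measure.volume_eq_prod, Measure.prod_restrict]

lemma pmeas_ae_mem : ∀ᵐ p ∂pmeas, p ∈ Set.Ioc (0:ℝ) 1 ×ˢ Set.Ioc (0:ℝ) 1 := by
  rw [pmeas_eq]
  exact ae_restrict_mem (measurableSet_Ioc.prod measurableSet_Ioc)

lemma pmeas_integrable {G : Type*} [NormedAddCommGroup G]
    {f : ℝ × ℝ → G} (hf : Continuous f) : Integrable f pmeas := by
  rw [pmeas_eq]
  refine IntegrableOn.mono_set ?_
    (Set.prod_mono Set.Ioc_subset_Icc_self Set.Ioc_subset_Icc_self)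
  exact hf.continuousOn.integrableOn_compact (isCompact_Icc.prod isCompact_Icc)

lemma pmeas_univ : (pmeas Set.univ).toReal = 1 := by
  rw [pmeas, ← Set.univ_prod_univ, Measure.prod_prod]
  simp [Real.volume_Ioc]

variable {E : Type*} [NormedAddCommGroup E] [NormedSpace ℝ E] [ProperSpace E]

set_option synthInstance.maxHeartbeats 1000000 in
lemma hasFDerivAt_pmeas_integral {G : (ℝ × ℝ) → E → ℝ}
    (hjc : Continuous (fun q : (ℝ × ℝ) × E => G q.1 q.2))
    (hjd : Continuous (fun q : (ℝ × ℝ) × E => fderiv ℝ (G q.1) q.2))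
    (hdiff : ∀ p z, DifferentiableAt ℝ (G p) z) (z₀ : E) :
    HasFDerivAt (fun z => ∫ p, G p z ∂pmeas)
      (∫ p, fderiv ℝ (G p) z₀ ∂pmeas) z₀ := by
  obtain ⟨C, hC⟩ := ((isCompact_Icc.prod isCompact_Icc).prod
      (isCompact_closedBall z₀ 1)).exists_bound_of_continuousOn
    (hjd.continuousOn :
      ContinuousOn (fun q : (ℝ × ℝ) × E => fderiv ℝ (G q.1) q.2)
        ((Set.Icc (0:ℝ) 1 ×ˢ Set.Icc (0:ℝ) 1) ×ˢ Metric.closedBall z₀ 1))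
  have key := hasFDerivAt_integral_of_dominated_of_fderiv_le
    (F := fun z p => G p z) (F' := fun z p => fderiv ℝ (G p) z)
    (bound := fun _ => C) (μ := pmeas) (x₀ := z₀) (Metric.ball_mem_nhds z₀ one_pos)
    (Filter.Eventually.of_forall fun z =>
      ((hjc.comp (continuous_id.prodMk continuous_const)).aestronglyMeasurable :
        AEStronglyMeasurable (fun p => G p z) pmeas))
    (pmeas_integrable (hjc.comp (continuous_id.prodMk continuous_const)))
    ((hjd.comp (continuous_id.prodMk continuous_const)).aestronglyMeasurable)
    (pmeas_ae_mem.mono ?_)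
    (integrable_const C)
    (Filter.Eventually.of_forall fun p =>
      fun z _ => (hdiff p z).hasFDerivAt)
  · exact key
  · intro p hp z hz
    have hp' : p ∈ Set.Icc (0:ℝ) 1 ×ˢ Set.Icc (0:ℝ) 1 :=
      ⟨Set.Ioc_subset_Icc_self hp.1, Set.Ioc_subset_Icc_self hp.2⟩
    exact hC (p, z) ⟨hp', Metric.ball_subset_closedBall hz⟩

end Param

section Swap

open MeasureTheory

variable {E : Type*} [NormedAddCommGroup E] [NormedSpace ℝ E] [ProperSpace E]

/-- embedding of a direction into the product space -/
def inrV (E : Type*) [NormedAddCommGroup E] [NormedSpace ℝ E] (v : E) : (ℝ × ℝ) × E :=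
  ((0, 0), v)

lemma dList_partial (g : (ℝ × ℝ) × E → ℝ) (hg : DSm g) (M : List E) (p : ℝ × ℝ) :
    dList M (fun z => g (p, z)) = fun z => dList (M.map (inrV E)) g (p, z) := by
  have h0 : (fun z : E => g (p, z))
      = fun z => g (((p, 0) : (ℝ × ℝ) × E) + ContinuousLinearMap.inr ℝ (ℝ × ℝ) E z) := by
    funext z
    congr 1
    simp
  have h1 := dList_comp_affine hg (ContinuousLinearMap.inr ℝ (ℝ × ℝ) E) ((p, 0)) M
  rw [h0, h1]
  funext z
  have h2 : (((p, 0) : (ℝ × ℝ) × E) + ContinuousLinearMap.inr ℝ (ℝ × ℝ) E z) = (p, z) := by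
    simp
  rw [h2]
  rfl

lemma partial_differentiable (g : (ℝ × ℝ) × E → ℝ) (hg : DSm g) (p : ℝ × ℝ) :
    DSm (fun z => g (p, z)) := by
  have h0 : (fun z : E => g (p, z))
      = fun z => g (((p, 0) : (ℝ × ℝ) × E) + ContinuousLinearMap.inr ℝ (ℝ × ℝ) E z) := by
    funext z; congr 1; simp
  rw [h0]
  exact hg.comp_affine _ _

lemma fderiv_partial (g : (ℝ × ℝ) × E → ℝ) (hg : ContDiff ℝ (⊤ : ℕ∞) g) (p : ℝ × ℝ) (z : E) :
    fderiv ℝ (fun z => g (p, z)) z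
      = (fderiv ℝ g (p, z)).comp (ContinuousLinearMap.inr ℝ (ℝ × ℝ) E) := by
  have h : HasFDerivAt (fun z : E => g (p, z))
      ((fderiv ℝ g (p, z)).comp (ContinuousLinearMap.inr ℝ (ℝ × ℝ) E)) z :=
    ((hg.differentiable (by simp)) (p, z)).hasFDerivAt.comp z (hasFDerivAt_prodMk_right p z)
  exact h.fderiv

set_option synthInstance.maxHeartbeats 1000000 in
lemma dList_pmeas_integral_swap (g : (ℝ × ℝ) × E → ℝ) (hg : ContDiff ℝ (⊤ : ℕ∞) g) (M : List E) :
    dList M (fun z => ∫ p, g (p, z) ∂pmeas)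
      = fun z => ∫ p, dList (M.map (inrV E)) g (p, z) ∂pmeas := by
  induction M with
  | nil => rfl
  | cons v M ih =>
    set L := M.map (inrV E) with hL
    have hgL : ContDiff ℝ (⊤ : ℕ∞) (dList L g) := hg.dList_contDiff L
    have hjc : Continuous (fun q : (ℝ × ℝ) × E => dList L g (q.1, q.2)) := by
      have heq : (fun q : (ℝ × ℝ) × E => dList L g (q.1, q.2)) = dList L g := by
        funext q; rfl
      rw [heq]; exact hgL.continuous
    -- joint continuity of the partial fderiv
    have hjdeq : (fun q : (ℝ × ℝ) × E => fderiv ℝ (fun z => dList L g (q.1, z)) q.2)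
        = fun q => (fderiv ℝ (dList L g) q).comp (ContinuousLinearMap.inr ℝ (ℝ × ℝ) E) := by
      funext q
      rw [fderiv_partial (dList L g) hgL q.1 q.2]
    have hjd : Continuous
        (fun q : (ℝ × ℝ) × E => fderiv ℝ (fun z => dList L g (q.1, z)) q.2) := by
      rw [hjdeq]
      exact ((hgL.fderiv_right (m := (⊤ : ℕ∞)) (by simp)).continuous).clm_comp continuous_const
    have hdiff : ∀ (p : ℝ × ℝ) (z : E), DifferentiableAt ℝ (fun z => dList L g (p, z)) z :=
      fun p z => (partial_differentiable (dList L g) (hgL.dsm) p) [] z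
    funext z₀
    rw [dList_cons]
    simp only [ih]
    have hkey := hasFDerivAt_pmeas_integral
      (G := fun p z => dList L g (p, z)) hjc hjd hdiff z₀
    rw [hkey.fderiv]
    have hInt : Integrable (fun p => fderiv ℝ (fun z => dList L g (p, z)) z₀) pmeas := by
      apply pmeas_integrable
      have : (fun p => fderiv ℝ (fun z => dList L g (p, z)) z₀)
          = fun p => (fderiv ℝ (dList L g) (p, z₀)).comp
              (ContinuousLinearMap.inr ℝ (ℝ × ℝ) E) := by
        funext p
        exact fderiv_partial (dList L g) hgL p z₀
      rw [this]
      exact (((hgL.fderiv_right (m := (⊤ : ℕ∞)) (by simp)).continuous).comp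
        (continuous_id.prodMk continuous_const)).clm_comp continuous_const
    rw [ContinuousLinearMap.integral_apply hInt v]
    apply integral_congr_ae
    apply Filter.Eventually.of_forall
    intro p
    beta_reduce
    rw [fderiv_partial (dList L g) hgL p z₀]
    simp only [ContinuousLinearMap.comp_apply, ContinuousLinearMap.inr_apply]
    rw [List.map_cons, dList_cons]
    rfl

lemma dsm_pmeas_integral (g : (ℝ × ℝ) × E → ℝ) (hg : ContDiff ℝ (⊤ : ℕ∞) g) :
    DSm (fun z => ∫ p, g (p, z) ∂pmeas) := by
  intro M z₀
  rw [dList_pmeas_integral_swap g hg M]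
  set L := M.map (inrV E)
  have hgL : ContDiff ℝ (⊤ : ℕ∞) (dList L g) := hg.dList_contDiff L
  have hjc : Continuous (fun q : (ℝ × ℝ) × E => dList L g (q.1, q.2)) := by
    have : (fun q : (ℝ × ℝ) × E => dList L g (q.1, q.2)) = dList L g := by
      funext q; rfl
    rw [this]; exact hgL.continuous
  have hjdeq : (fun q : (ℝ × ℝ) × E => fderiv ℝ (fun z => dList L g (q.1, z)) q.2)
      = fun q => (fderiv ℝ (dList L g) q).comp (ContinuousLinearMap.inr ℝ (ℝ × ℝ) E) := by
    funext q
    rw [fderiv_partial (dList L g) hgL q.1 q.2]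
  have hjd : Continuous
      (fun q : (ℝ × ℝ) × E => fderiv ℝ (fun z => dList L g (q.1, z)) q.2) := by
    rw [hjdeq]
    exact ((hgL.fderiv_right (m := (⊤ : ℕ∞)) (by simp)).continuous).clm_comp continuous_const
  have hdiff : ∀ (p : ℝ × ℝ) (z : E), DifferentiableAt ℝ (fun z => dList L g (p, z)) z :=
    fun p z => (partial_differentiable (dList L g) (hgL.dsm) p) [] z
  exact (hasFDerivAt_pmeas_integral
    (G := fun p z => dList L g (p, z)) hjc hjd hdiff z₀).differentiableAt

end Swap

section PBnd

/-- parameter box `(0,1]²` -/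
def pbox : Set (ℝ × ℝ) := Set.Ioc (0:ℝ) 1 ×ˢ Set.Ioc (0:ℝ) 1

/-- the weight `⟨x-α⟩⟨x-y⟩` -/
def Wgt {d : ℕ} (α : Fin d → ℝ) (z : (Fin d → ℝ) × (Fin d → ℝ)) : ℝ :=
  jap (z.1 - α) * jap (z.1 - z.2)

lemma Wgt_nonneg {d : ℕ} (α : Fin d → ℝ) (z : (Fin d → ℝ) × (Fin d → ℝ)) :
    0 ≤ Wgt α z := mul_nonneg (jap_nonneg _) (jap_nonneg _)

lemma one_le_Wgt {d : ℕ} (α : Fin d → ℝ) (z : (Fin d → ℝ) × (Fin d → ℝ)) :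
    1 ≤ Wgt α z := by
  have h1 := one_le_jap (z.1 - α)
  have h2 := one_le_jap (z.1 - z.2)
  unfold Wgt
  nlinarith

/-- family of functions on `ℝ^d × ℝ^d`, parametrized by `α ∈ ℝ^d` and `p ∈ (0,1]²`,
all of whose `z`-derivatives are bounded by `C⬝b α z` uniformly in `α, p` -/
def PBnd {d : ℕ} (b : (Fin d → ℝ) → ((Fin d → ℝ) × (Fin d → ℝ)) → ℝ)
    (f : (Fin d → ℝ) → (ℝ × ℝ) → ((Fin d → ℝ) × (Fin d → ℝ)) → ℝ) : Prop :=
  (∀ α p, DSm (f α p)) ∧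
  ∀ M : List ((Fin d → ℝ) × (Fin d → ℝ)), ∃ C, 0 ≤ C ∧
    ∀ α, ∀ p ∈ pbox, ∀ z, ‖dList M (f α p) z‖ ≤ C * b α z

lemma list_prod_map_le {ι : Type*} (l : List ι) (φ ψ : ι → ℝ)
    (h : ∀ i ∈ l, φ i ≤ ψ i) (h0 : ∀ i ∈ l, 0 ≤ φ i) :
    (l.map φ).prod ≤ (l.map ψ).prod := by
  induction l with
  | nil => simp
  | cons a l ih =>
    simp only [List.map_cons, List.prod_cons]
    have h1 := h a List.mem_cons_self
    have h2 := ih (fun i hi => h i (List.mem_cons_of_mem a hi))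
      (fun i hi => h0 i (List.mem_cons_of_mem a hi))
    have h3 := h0 a List.mem_cons_self
    have h4 : (0:ℝ) ≤ (l.map φ).prod := by
      apply List.prod_nonneg
      intro x hx
      simp only [List.mem_map] at hx
      obtain ⟨i, hi, rfl⟩ := hx
      exact h0 i (List.mem_cons_of_mem a hi)
    exact mul_le_mul h1 h2 h4 (h3.trans h1)

lemma PBnd.mul {d : ℕ} {b₁ b₂ : (Fin d → ℝ) → ((Fin d → ℝ) × (Fin d → ℝ)) → ℝ}
    {f g : (Fin d → ℝ) → (ℝ × ℝ) → ((Fin d → ℝ) × (Fin d → ℝ)) → ℝ}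
    (hb₁ : ∀ α z, 0 ≤ b₁ α z) (hb₂ : ∀ α z, 0 ≤ b₂ α z)
    (hf : PBnd b₁ f) (hg : PBnd b₂ g) :
    PBnd (fun α z => b₁ α z * b₂ α z) (fun α p z => f α p z * g α p z) := by
  obtain ⟨hf1, hf2⟩ := hf
  obtain ⟨hg1, hg2⟩ := hg
  refine ⟨fun α p => (hf1 α p).mul (hg1 α p), ?_⟩
  intro M
  choose Cf hCf0 hCf using hf2
  choose Cg hCg0 hCg using hg2
  refine ⟨((splits M).map (fun q => Cf q.1 * Cg q.2)).sum, ?_, ?_⟩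
  · apply List.sum_nonneg
    intro x hx
    simp only [List.mem_map] at hx
    obtain ⟨q, hq, rfl⟩ := hx
    exact mul_nonneg (hCf0 _) (hCg0 _)
  · intro α p hp z
    refine (norm_dList_mul_le (hf1 α p) (hg1 α p) M z).trans ?_
    have hterm : ∀ q ∈ splits M,
        ‖dList q.1 (f α p) z‖ * ‖dList q.2 (g α p) z‖
          ≤ (Cf q.1 * Cg q.2) * (b₁ α z * b₂ α z) := by
      intro q _
      have h1 := hCf q.1 α p hp z
      have h2 := hCg q.2 α p hp z
      have := mul_le_mul h1 h2 (norm_nonneg _)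
        (mul_nonneg (hCf0 q.1) (hb₁ α z))
      calc ‖dList q.1 (f α p) z‖ * ‖dList q.2 (g α p) z‖
          ≤ (Cf q.1 * b₁ α z) * (Cg q.2 * b₂ α z) := this
        _ = (Cf q.1 * Cg q.2) * (b₁ α z * b₂ α z) := by ring
    refine (list_sum_le_sum _ _ _ hterm).trans ?_
    rw [show (fun q : List ((Fin d → ℝ) × (Fin d → ℝ)) × List ((Fin d → ℝ) × (Fin d → ℝ)) =>
        Cf q.1 * Cg q.2 * (b₁ α z * b₂ α z))
      = fun q => (fun q : List ((Fin d → ℝ) × (Fin d → ℝ)) × List ((Fin d → ℝ) × (Fin d → ℝ)) =>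
        Cf q.1 * Cg q.2) q * (b₁ α z * b₂ α z) from rfl]
    rw [List.sum_map_mul_right]

lemma PBnd.mono {d : ℕ} {b₁ b₂ : (Fin d → ℝ) → ((Fin d → ℝ) × (Fin d → ℝ)) → ℝ}
    {f : (Fin d → ℝ) → (ℝ × ℝ) → ((Fin d → ℝ) × (Fin d → ℝ)) → ℝ}
    (hb : ∀ α z, b₁ α z ≤ b₂ α z) (hf : PBnd b₁ f) : PBnd b₂ f := by
  obtain ⟨hf1, hf2⟩ := hf
  refine ⟨hf1, fun M => ?_⟩
  obtain ⟨C, hC0, hC⟩ := hf2 M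
  exact ⟨C, hC0, fun α p hp z => (hC α p hp z).trans
    (mul_le_mul_of_nonneg_left (hb α z) hC0)⟩

lemma PBnd.add {d : ℕ} {b : (Fin d → ℝ) → ((Fin d → ℝ) × (Fin d → ℝ)) → ℝ}
    {f g : (Fin d → ℝ) → (ℝ × ℝ) → ((Fin d → ℝ) × (Fin d → ℝ)) → ℝ}
    (hb : ∀ α z, 0 ≤ b α z)
    (hf : PBnd b f) (hg : PBnd b g) :
    PBnd b (fun α p z => f α p z + g α p z) := by
  obtain ⟨hf1, hf2⟩ := hf
  obtain ⟨hg1, hg2⟩ := hg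
  refine ⟨fun α p => (hf1 α p).add (hg1 α p), fun M => ?_⟩
  obtain ⟨C₁, hC₁0, hC₁⟩ := hf2 M
  obtain ⟨C₂, hC₂0, hC₂⟩ := hg2 M
  refine ⟨C₁ + C₂, by linarith, fun α p hp z => ?_⟩
  rw [dList_add (hf1 α p) (hg1 α p)]
  refine (norm_add_le _ _).trans ?_
  have := hC₁ α p hp z
  have := hC₂ α p hp z
  nlinarith [hb α z]

lemma PBnd.zero {d : ℕ} {b : (Fin d → ℝ) → ((Fin d → ℝ) × (Fin d → ℝ)) → ℝ} :
    PBnd b (fun _ _ _ => (0:ℝ)) := by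
  constructor
  · intro α p
    exact (contDiff_const : ContDiff ℝ (⊤ : ℕ∞) (fun _ : (Fin d → ℝ) × (Fin d → ℝ) => (0:ℝ))).dsm
  · intro M
    refine ⟨0, le_refl 0, fun α p hp z => ?_⟩
    cases M with
    | nil => simp
    | cons v M => rw [dList_const (0:ℝ) v M]; simp

lemma PBnd.finsetSum {d : ℕ} {ι : Type*} (s : Finset ι)
    {b : (Fin d → ℝ) → ((Fin d → ℝ) × (Fin d → ℝ)) → ℝ}
    {f : ι → (Fin d → ℝ) → (ℝ × ℝ) → ((Fin d → ℝ) × (Fin d → ℝ)) → ℝ}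
    (hb : ∀ α z, 0 ≤ b α z)
    (hf : ∀ i ∈ s, PBnd b (f i)) :
    PBnd b (fun α p z => ∑ i ∈ s, f i α p z) := by
  classical
  induction s using Finset.induction_on with
  | empty => simpa using (PBnd.zero (b := b))
  | insert _ _ hnot ih =>
    rename_i a s
    have h1 := hf a (Finset.mem_insert_self a s)
    have h2 := ih (fun i hi => hf i (Finset.mem_insert_of_mem hi))
    have := h1.add hb h2
    refine ⟨fun α p => ?_, fun M => ?_⟩
    · have hD := this.1 α p
      have heq : (fun z => f a α p z + ∑ i ∈ s, f i α p z)
          = fun z => ∑ i ∈ insert a s, f i α p z := by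
        funext z; rw [Finset.sum_insert hnot]
      show DSm (fun z => ∑ i ∈ insert a s, f i α p z)
      rw [← heq]
      exact hD
    · obtain ⟨C, hC0, hC⟩ := this.2 M
      refine ⟨C, hC0, fun α p hp z => ?_⟩
      have heq : (fun z => ∑ i ∈ insert a s, f i α p z)
          = (fun z => f a α p z + ∑ i ∈ s, f i α p z) := by
        funext z; rw [Finset.sum_insert hnot]
      show ‖dList M (fun z => ∑ i ∈ insert a s, f i α p z) z‖ ≤ C * b α z
      rw [heq]
      exact hC α p hp z

end PBnd

section Components

/-- the linear part of the triangle parametrization in `z = (x,y)` -/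
def TP {d : ℕ} (p : ℝ × ℝ) : ((Fin d → ℝ) × (Fin d → ℝ)) →L[ℝ] (Fin d → ℝ) :=
  (p.1 - p.2 * p.1) • ContinuousLinearMap.fst ℝ (Fin d → ℝ) (Fin d → ℝ)
    + (p.2 * p.1) • ContinuousLinearMap.snd ℝ (Fin d → ℝ) (Fin d → ℝ)

/-- the constant part of the triangle parametrization -/
def cP {d : ℕ} (α : Fin d → ℝ) (p : ℝ × ℝ) : Fin d → ℝ := (1 - p.1) • α

lemma TP_apply {d : ℕ} (p : ℝ × ℝ) (z : (Fin d → ℝ) × (Fin d → ℝ)) :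
    TP p z = (p.1 - p.2 * p.1) • z.1 + (p.2 * p.1) • z.2 := by
  simp [TP]

lemma uu_eq {d : ℕ} (α : Fin d → ℝ) (p : ℝ × ℝ) (z : (Fin d → ℝ) × (Fin d → ℝ)) :
    cP α p + TP p z = α + p.1 • (z.1 - α) + (p.2 * p.1) • (z.2 - z.1) := by
  rw [TP_apply, cP]
  funext i
  simp only [Pi.add_apply, Pi.smul_apply, Pi.sub_apply, smul_eq_mul]
  ring

lemma TP_norm_le {d : ℕ} {p : ℝ × ℝ} (hp : p ∈ pbox)
    (v : (Fin d → ℝ) × (Fin d → ℝ)) : ‖TP p v‖ ≤ 2 * ‖v‖ := by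
  obtain ⟨⟨h1, h2⟩, ⟨h3, h4⟩⟩ := hp
  rw [TP_apply]
  refine (norm_add_le _ _).trans ?_
  rw [norm_smul, norm_smul]
  have hv1 : ‖v.1‖ ≤ ‖v‖ := norm_fst_le v
  have hv2 : ‖v.2‖ ≤ ‖v‖ := norm_snd_le v
  have ha : ‖p.1 - p.2 * p.1‖ ≤ 1 := by
    rw [Real.norm_eq_abs, abs_le]; constructor <;> nlinarith
  have hb : ‖p.2 * p.1‖ ≤ 1 := by
    rw [Real.norm_eq_abs, abs_le]; constructor <;> nlinarith
  have hn1 : (0:ℝ) ≤ ‖p.1 - p.2 * p.1‖ := norm_nonneg _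
  have hn2 : (0:ℝ) ≤ ‖p.2 * p.1‖ := norm_nonneg _
  nlinarith [norm_nonneg v, norm_nonneg v.1, norm_nonneg v.2]

lemma exists_uniform_basis_bound {d : ℕ} (hd : 1 ≤ d) (f : (Fin d → ℝ) → ℝ)
    (hf : ∀ L : List (Fin d), ∃ C : ℝ,
      ∀ y, ‖dList (L.map (fun i => (Pi.single i (1:ℝ) : Fin d → ℝ))) f y‖ ≤ C) :
    ∀ m : ℕ, ∃ C : ℝ, 0 ≤ C ∧ ∀ L : List (Fin d), L.length = m →
      ∀ y, ‖dList (L.map (fun i => (Pi.single i (1:ℝ) : Fin d → ℝ))) f y‖ ≤ C := by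
  intro m
  induction m generalizing f with
  | zero =>
    obtain ⟨C, hC⟩ := hf []
    refine ⟨max C 0, le_max_right _ _, ?_⟩
    intro L hL y
    rw [List.length_eq_zero_iff] at hL
    subst hL
    exact (hC y).trans (le_max_left _ _)
  | succ m ih =>
    have hstep : ∀ i : Fin d, ∃ C : ℝ, 0 ≤ C ∧ ∀ L : List (Fin d), L.length = m →
        ∀ y, ‖dList (L.map (fun i => (Pi.single i (1:ℝ) : Fin d → ℝ)))
          (dList [(Pi.single i (1:ℝ) : Fin d → ℝ)] f) y‖ ≤ C := by
      intro i
      apply ih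
      intro L
      obtain ⟨C, hC⟩ := hf (L ++ [i])
      refine ⟨C, fun y => ?_⟩
      rw [← dList_append]
      have heq : (L.map (fun i => (Pi.single i (1:ℝ) : Fin d → ℝ)))
            ++ [(Pi.single i (1:ℝ) : Fin d → ℝ)]
          = (L ++ [i]).map (fun i => (Pi.single i (1:ℝ) : Fin d → ℝ)) := by simp
      rw [heq]
      exact hC y
    choose Cv hCv0 hCv using hstep
    refine ⟨∑ i, Cv i, Finset.sum_nonneg (fun i _ => hCv0 i), ?_⟩
    intro L hL y
    rcases List.eq_nil_or_concat L with rfl | ⟨L', i, rfl⟩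
    · simp at hL
    · rw [List.concat_eq_append] at hL ⊢
      have hL' : L'.length = m := by
        rw [List.length_append] at hL
        simpa using hL
      have hbd := hCv i L' hL' y
      rw [← dList_append] at hbd
      have heq : (L'.map (fun i => (Pi.single i (1:ℝ) : Fin d → ℝ)))
            ++ [(Pi.single i (1:ℝ) : Fin d → ℝ)]
          = ((L' ++ [i]).map (fun i => (Pi.single i (1:ℝ) : Fin d → ℝ))) := by simp
      rw [heq] at hbd
      exact hbd.trans (Finset.single_le_sum (fun i _ => hCv0 i) (Finset.mem_univ i))

lemma pbnd_B {d : ℕ} (hd : 1 ≤ d) (B : Fin d → Fin d → (Fin d → ℝ) → ℝ)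
    (hBsmooth : ∀ j k, ContDiff ℝ (⊤ : ℕ∞) (B j k)) (hBbdd : BBounded B) (j k : Fin d) :
    PBnd (fun _ _ => (1:ℝ)) (fun α p z => B j k (cP α p + TP p z)) := by
  constructor
  · intro α p
    exact (hBsmooth j k).dsm.comp_affine (TP p) (cP α p)
  · intro M
    obtain ⟨C0, hC00, hC0⟩ := exists_uniform_basis_bound hd (B j k)
      (fun L => hBbdd j k L) M.length
    refine ⟨C0 * (M.map (fun v => (d:ℝ) * (2 * ‖v‖))).prod, ?_, ?_⟩
    · apply mul_nonneg hC00
      apply List.prod_nonneg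
      intro x hx
      simp only [List.mem_map] at hx
      obtain ⟨v, _, rfl⟩ := hx
      beta_reduce
      positivity
    · intro α p hp z
      rw [mul_one]
      rw [dList_comp_affine ((hBsmooth j k).dsm) (TP p) (cP α p) M]
      refine (dList_norm_le_of_basis hd ((hBsmooth j k).dsm) (M.map (TP p)) C0 ?_ _).trans ?_
      · intro L hL y
        exact hC0 L (by simpa using hL) y
      · rw [List.map_map]
        apply mul_le_mul_of_nonneg_left _ hC00
        apply list_prod_map_le
        · intro v _
          simp only [Function.comp_apply]
          have := TP_norm_le hp v
          have hd0 : (0:ℝ) ≤ d := Nat.cast_nonneg d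
          nlinarith [norm_nonneg (TP p v)]
        · intro v _
          simp only [Function.comp_apply]
          positivity

lemma pbnd_f1 {d : ℕ} (j : Fin d) :
    PBnd (fun α (z : (Fin d → ℝ) × (Fin d → ℝ)) => jap (z.1 - α))
      (fun α p (z : (Fin d → ℝ) × (Fin d → ℝ)) => (z.1 - α) j) := by
  have heq : ∀ α : Fin d → ℝ, (fun z : (Fin d → ℝ) × (Fin d → ℝ) => (z.1 - α) j)
      = fun z => (-(α j)) + ((ContinuousLinearMap.proj j).comp
          (ContinuousLinearMap.fst ℝ (Fin d → ℝ) (Fin d → ℝ))) z := by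
    intro α
    funext z
    simp only [ContinuousLinearMap.comp_apply, ContinuousLinearMap.coe_fst',
      ContinuousLinearMap.proj_apply, Pi.sub_apply]
    ring
  set T := fun (α : Fin d → ℝ) => ((ContinuousLinearMap.proj j).comp
      (ContinuousLinearMap.fst ℝ (Fin d → ℝ) (Fin d → ℝ)))
  constructor
  · intro α p
    beta_reduce
    rw [heq α]
    exact DSm.affine _ _
  · intro M
    match M with
    | [] =>
      refine ⟨1, zero_le_one, fun α p hp z => ?_⟩
      beta_reduce
      rw [one_mul, dList_nil, Real.norm_eq_abs]
      exact abs_apply_le_jap (z.1 - α) j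
    | [v] =>
      refine ⟨‖v.1 j‖, norm_nonneg _, fun α p hp z => ?_⟩
      beta_reduce
      rw [heq α, dList_affine_single]
      have h1 : ‖((ContinuousLinearMap.proj j).comp
          (ContinuousLinearMap.fst ℝ (Fin d → ℝ) (Fin d → ℝ))) v‖ = ‖v.1 j‖ := rfl
      rw [h1]
      nlinarith [one_le_jap (z.1 - α), norm_nonneg (v.1 j)]
    | v :: w :: M' =>
      refine ⟨0, le_refl 0, fun α p hp z => ?_⟩
      beta_reduce
      rw [heq α, dList_affine_cons₂]
      simp [jap_nonneg]

lemma pbnd_f2 {d : ℕ} (k : Fin d) :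
    PBnd (fun α (z : (Fin d → ℝ) × (Fin d → ℝ)) => jap (z.1 - z.2))
      (fun α p (z : (Fin d → ℝ) × (Fin d → ℝ)) => p.1 * ((z.2 - z.1) k)) := by
  have heq : ∀ p : ℝ × ℝ, (fun z : (Fin d → ℝ) × (Fin d → ℝ) => p.1 * ((z.2 - z.1) k))
      = fun z => (0:ℝ) + (p.1 • ((ContinuousLinearMap.proj k).comp
          (ContinuousLinearMap.snd ℝ (Fin d → ℝ) (Fin d → ℝ)
            - ContinuousLinearMap.fst ℝ (Fin d → ℝ) (Fin d → ℝ)))) z := by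
    intro p
    funext z
    simp only [ContinuousLinearMap.smul_apply, ContinuousLinearMap.comp_apply,
      ContinuousLinearMap.coe_sub', Pi.sub_apply, ContinuousLinearMap.coe_snd',
      ContinuousLinearMap.coe_fst', ContinuousLinearMap.proj_apply, smul_eq_mul]
    ring
  have habs : ∀ (z : (Fin d → ℝ) × (Fin d → ℝ)), |(z.2 - z.1) k| ≤ jap (z.1 - z.2) := by
    intro z
    have : (z.2 - z.1) k = -((z.1 - z.2) k) := by
      simp only [Pi.sub_apply]; ring
    rw [this, abs_neg]
    exact abs_apply_le_jap (z.1 - z.2) k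
  constructor
  · intro α p
    beta_reduce
    rw [heq p]
    exact DSm.affine _ _
  · intro M
    match M with
    | [] =>
      refine ⟨1, zero_le_one, fun α p hp z => ?_⟩
      obtain ⟨⟨hp1, hp2⟩, _⟩ := hp
      beta_reduce
      rw [one_mul, dList_nil, Real.norm_eq_abs, abs_mul]
      have h1 : |p.1| ≤ 1 := by rw [abs_le]; constructor <;> linarith
      have h2 := habs z
      nlinarith [abs_nonneg ((z.2 - z.1) k), abs_nonneg p.1, jap_nonneg (z.1 - z.2)]
    | [v] =>
      refine ⟨2 * ‖v‖, by positivity, fun α p hp z => ?_⟩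
      obtain ⟨⟨hp1, hp2⟩, _⟩ := hp
      beta_reduce
      rw [heq p, dList_affine_single]
      have h1 : ‖(p.1 • ((ContinuousLinearMap.proj k).comp
          (ContinuousLinearMap.snd ℝ (Fin d → ℝ) (Fin d → ℝ)
            - ContinuousLinearMap.fst ℝ (Fin d → ℝ) (Fin d → ℝ)))) v‖
          = |p.1| * |v.2 k - v.1 k| := by
        simp only [ContinuousLinearMap.smul_apply, ContinuousLinearMap.comp_apply,
          ContinuousLinearMap.coe_sub', Pi.sub_apply, ContinuousLinearMap.coe_snd',
          ContinuousLinearMap.coe_fst', ContinuousLinearMap.proj_apply, smul_eq_mul,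
          Real.norm_eq_abs, abs_mul]
      rw [h1]
      have h2 : |p.1| ≤ 1 := by rw [abs_le]; constructor <;> linarith
      have h3 : |v.2 k - v.1 k| ≤ 2 * ‖v‖ := by
        have ha : |v.2 k| ≤ ‖v.2‖ := by
          rw [show |v.2 k| = ‖v.2 k‖ from rfl]; exact norm_le_pi_norm v.2 k
        have hb : |v.1 k| ≤ ‖v.1‖ := by
          rw [show |v.1 k| = ‖v.1 k‖ from rfl]; exact norm_le_pi_norm v.1 k
        have hc : ‖v.1‖ ≤ ‖v‖ := norm_fst_le v
        have hcc : ‖v.2‖ ≤ ‖v‖ := norm_snd_le v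
        have := abs_sub (v.2 k) (v.1 k)
        calc |v.2 k - v.1 k| ≤ |v.2 k| + |v.1 k| := abs_sub _ _
          _ ≤ 2 * ‖v‖ := by linarith
      nlinarith [one_le_jap (z.1 - z.2), abs_nonneg (v.2 k - v.1 k), abs_nonneg p.1,
        norm_nonneg v]
    | v :: w :: M' =>
      refine ⟨0, le_refl 0, fun α p hp z => ?_⟩
      beta_reduce
      rw [heq p, dList_affine_cons₂]
      simp [jap_nonneg]

end Components

section Flux

open MeasureTheory

variable {d : ℕ}

/-- reduced flux integrand (after using antisymmetry of `B`) -/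
def fluxInt (B : Fin d → Fin d → (Fin d → ℝ) → ℝ) (α : Fin d → ℝ)
    (p : ℝ × ℝ) (z : (Fin d → ℝ) × (Fin d → ℝ)) : ℝ :=
  ∑ jk : Fin d × Fin d,
    B jk.1 jk.2 (cP α p + TP p z) * ((z.1 - α) jk.1 * (p.1 * ((z.2 - z.1) jk.2)))

lemma pbnd_fluxInt (hd : 1 ≤ d) (B : Fin d → Fin d → (Fin d → ℝ) → ℝ)
    (hBsmooth : ∀ j k, ContDiff ℝ (⊤ : ℕ∞) (B j k)) (hBbdd : BBounded B) :
    PBnd Wgt (fluxInt B) := by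
  show PBnd Wgt (fun α p z => ∑ jk : Fin d × Fin d,
    B jk.1 jk.2 (cP α p + TP p z) * ((z.1 - α) jk.1 * (p.1 * ((z.2 - z.1) jk.2))))
  apply PBnd.finsetSum Finset.univ Wgt_nonneg
  intro jk _
  have h12 := PBnd.mul (fun α (z : (Fin d → ℝ) × (Fin d → ℝ)) => jap_nonneg (z.1 - α))
    (fun α (z : (Fin d → ℝ) × (Fin d → ℝ)) => jap_nonneg (z.1 - z.2))
    (pbnd_f1 jk.1) (pbnd_f2 jk.2)
  have hB := pbnd_B hd B hBsmooth hBbdd jk.1 jk.2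
  have hall := PBnd.mul (fun _ _ => zero_le_one)
    (fun α (z : (Fin d → ℝ) × (Fin d → ℝ)) =>
      mul_nonneg (jap_nonneg (z.1 - α)) (jap_nonneg (z.1 - z.2))) hB h12
  exact hall.mono (fun α z => le_of_eq (one_mul _))

lemma fluxInt_joint_smooth (B : Fin d → Fin d → (Fin d → ℝ) → ℝ)
    (hBsmooth : ∀ j k, ContDiff ℝ (⊤ : ℕ∞) (B j k)) (α : Fin d → ℝ) :
    ContDiff ℝ (⊤ : ℕ∞) (fun q : (ℝ × ℝ) × ((Fin d → ℝ) × (Fin d → ℝ)) =>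
      fluxInt B α q.1 q.2) := by
  show ContDiff ℝ (⊤ : ℕ∞) (fun q : (ℝ × ℝ) × ((Fin d → ℝ) × (Fin d → ℝ)) =>
    ∑ jk : Fin d × Fin d, B jk.1 jk.2 (cP α q.1 + TP q.1 q.2)
      * ((q.2.1 - α) jk.1 * (q.1.1 * ((q.2.2 - q.2.1) jk.2))))
  apply ContDiff.sum
  intro jk _
  have ht : ContDiff ℝ (⊤ : ℕ∞) (fun q : (ℝ × ℝ) × ((Fin d → ℝ) × (Fin d → ℝ)) => q.1.1) :=
    contDiff_fst.comp contDiff_fst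
  have hs : ContDiff ℝ (⊤ : ℕ∞) (fun q : (ℝ × ℝ) × ((Fin d → ℝ) × (Fin d → ℝ)) => q.1.2) :=
    contDiff_snd.comp contDiff_fst
  have hx : ContDiff ℝ (⊤ : ℕ∞) (fun q : (ℝ × ℝ) × ((Fin d → ℝ) × (Fin d → ℝ)) => q.2.1) :=
    contDiff_fst.comp contDiff_snd
  have hy : ContDiff ℝ (⊤ : ℕ∞) (fun q : (ℝ × ℝ) × ((Fin d → ℝ) × (Fin d → ℝ)) => q.2.2) :=
    contDiff_snd.comp contDiff_snd
  have harg : ContDiff ℝ (⊤ : ℕ∞) (fun q : (ℝ × ℝ) × ((Fin d → ℝ) × (Fin d → ℝ)) =>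
      cP α q.1 + TP q.1 q.2) := by
    have heq : (fun q : (ℝ × ℝ) × ((Fin d → ℝ) × (Fin d → ℝ)) => cP α q.1 + TP q.1 q.2)
        = fun q => α + q.1.1 • (q.2.1 - α) + (q.1.2 * q.1.1) • (q.2.2 - q.2.1) := by
      funext q
      exact uu_eq α q.1 q.2
    rw [heq]
    exact (contDiff_const.add (ht.smul (hx.sub contDiff_const))).add
      ((hs.mul ht).smul (hy.sub hx))
  have hcoord1 : ContDiff ℝ (⊤ : ℕ∞) (fun q : (ℝ × ℝ) × ((Fin d → ℝ) × (Fin d → ℝ)) =>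
      (q.2.1 - α) jk.1) := by
    have : (fun q : (ℝ × ℝ) × ((Fin d → ℝ) × (Fin d → ℝ)) => (q.2.1 - α) jk.1)
        = fun q => (ContinuousLinearMap.proj (R := ℝ) (φ := fun _ : Fin d => ℝ) jk.1)
            (q.2.1 - α) := rfl
    rw [this]
    exact (ContinuousLinearMap.proj (R := ℝ) (φ := fun _ : Fin d => ℝ) jk.1).contDiff.comp
      (hx.sub contDiff_const)
  have hcoord2 : ContDiff ℝ (⊤ : ℕ∞) (fun q : (ℝ × ℝ) × ((Fin d → ℝ) × (Fin d → ℝ)) =>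
      (q.2.2 - q.2.1) jk.2) := by
    have : (fun q : (ℝ × ℝ) × ((Fin d → ℝ) × (Fin d → ℝ)) => (q.2.2 - q.2.1) jk.2)
        = fun q => (ContinuousLinearMap.proj (R := ℝ) (φ := fun _ : Fin d => ℝ) jk.2)
            (q.2.2 - q.2.1) := rfl
    rw [this]
    exact (ContinuousLinearMap.proj (R := ℝ) (φ := fun _ : Fin d => ℝ) jk.2).contDiff.comp
      (hy.sub hx)
  exact ((hBsmooth jk.1 jk.2).comp harg).mul (hcoord1.mul (ht.mul hcoord2))

lemma antisym_sum (B : Fin d → Fin d → (Fin d → ℝ) → ℝ)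
    (hBanti : ∀ j k x, B j k x = - B k j x) (u v : Fin d → ℝ) :
    ∑ j, ∑ k, B j k u * v j * v k = 0 := by
  have h2 : ∀ j k : Fin d, B j k u * v j * v k = -(B k j u * v k * v j) := by
    intro j k
    rw [hBanti j k u]
    ring
  have h3 : ∑ j, ∑ k, B j k u * v j * v k
      = -∑ j, ∑ k, B k j u * v k * v j := by
    rw [← Finset.sum_neg_distrib]
    apply Finset.sum_congr rfl
    intro j _
    rw [← Finset.sum_neg_distrib]
    exact Finset.sum_congr rfl (fun k _ => h2 j k)
  have h4 : ∑ j : Fin d, ∑ k : Fin d, B k j u * v k * v j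
      = ∑ k : Fin d, ∑ j : Fin d, B k j u * v k * v j := Finset.sum_comm
  have h5 : ∑ k : Fin d, ∑ j : Fin d, B k j u * v k * v j
      = ∑ j : Fin d, ∑ k : Fin d, B j k u * v j * v k := rfl
  linarith

/-- the flux as a function of `z = (x,y)`, written as a parametric integral -/
def Fflux (B : Fin d → Fin d → (Fin d → ℝ) → ℝ) (α : Fin d → ℝ)
    (z : (Fin d → ℝ) × (Fin d → ℝ)) : ℝ :=
  ∫ p, fluxInt B α p z ∂pmeas

lemma flux_eq (B : Fin d → Fin d → (Fin d → ℝ) → ℝ)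
    (hBsmooth : ∀ j k, ContDiff ℝ (⊤ : ℕ∞) (B j k))
    (hBanti : ∀ j k x, B j k x = - B k j x)
    (α : Fin d → ℝ) (z : (Fin d → ℝ) × (Fin d → ℝ)) :
    fluxB B α z.1 z.2 = Fflux B α z := by
  obtain ⟨x, y⟩ := z
  have hpt : ∀ t s : ℝ,
      (∑ j, ∑ k, B j k (α + t • (x - α) + (s * t) • (y - x)) *
        ((x - α) j + s * (y - x) j) * (t * (y - x) k))
      = fluxInt B α (t, s) (x, y) := by
    intro t s
    rw [fluxInt]
    rw [Fintype.sum_prod_type]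
    have huu : cP α (t, s) + TP (t, s) (x, y)
        = α + t • (x - α) + (s * t) • (y - x) := uu_eq α (t, s) (x, y)
    have hzero := antisym_sum B hBanti (α + t • (x - α) + (s * t) • (y - x)) (y - x)
    have hexpand : ∀ j k : Fin d,
        B j k (α + t • (x - α) + (s * t) • (y - x)) *
          ((x - α) j + s * (y - x) j) * (t * (y - x) k)
        = B j k (α + t • (x - α) + (s * t) • (y - x)) * ((x - α) j * (t * (y - x) k))
          + (s * t) * (B j k (α + t • (x - α) + (s * t) • (y - x)) * (y - x) j * (y - x) k) := by
      intro j k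
      ring
    calc ∑ j, ∑ k, B j k (α + t • (x - α) + (s * t) • (y - x)) *
          ((x - α) j + s * (y - x) j) * (t * (y - x) k)
        = ∑ j, ∑ k, (B j k (α + t • (x - α) + (s * t) • (y - x)) *
            ((x - α) j * (t * (y - x) k))
          + (s * t) * (B j k (α + t • (x - α) + (s * t) • (y - x)) * (y - x) j * (y - x) k)) := by
          exact Finset.sum_congr rfl (fun j _ => Finset.sum_congr rfl (fun k _ => hexpand j k))
      _ = (∑ j, ∑ k, B j k (α + t • (x - α) + (s * t) • (y - x)) *
            ((x - α) j * (t * (y - x) k)))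
          + (s * t) * ∑ j, ∑ k, B j k (α + t • (x - α) + (s * t) • (y - x)) *
            (y - x) j * (y - x) k := by
          rw [Finset.mul_sum, ← Finset.sum_add_distrib]
          apply Finset.sum_congr rfl
          intro j _
          rw [Finset.mul_sum, ← Finset.sum_add_distrib]
      _ = (∑ j, ∑ k, B j k (α + t • (x - α) + (s * t) • (y - x)) *
            ((x - α) j * (t * (y - x) k))) + (s * t) * 0 := by rw [hzero]
      _ = ∑ j, ∑ k, B j k (α + t • (x - α) + (s * t) • (y - x)) *
            ((x - α) j * (t * (y - x) k)) := by ring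
      _ = ∑ j, ∑ k, B j k (cP α (t, s) + TP (t, s) (x, y)) *
            ((x - α) j * (t * (y - x) k)) := by rw [huu]
  have hcont : Continuous (fun p : ℝ × ℝ => fluxInt B α p (x, y)) :=
    ((fluxInt_joint_smooth B hBsmooth α).continuous).comp
      (continuous_id.prodMk continuous_const)
  have h1 : fluxB B α x y
      = ∫ t in (0:ℝ)..1, ∫ s in (0:ℝ)..1, fluxInt B α (t, s) (x, y) := by
    rw [fluxB]
    apply intervalIntegral.integral_congr
    intro t _
    apply intervalIntegral.integral_congr
    intro s _
    exact hpt t s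
  rw [h1]
  simp only [intervalIntegral.integral_of_le (zero_le_one (α := ℝ))]
  have hint : Integrable (Function.uncurry (fun t s => fluxInt B α (t, s) (x, y))) pmeas := by
    have : Function.uncurry (fun t s => fluxInt B α (t, s) (x, y))
        = fun p : ℝ × ℝ => fluxInt B α p (x, y) := by
      funext p
      rfl
    rw [this]
    exact pmeas_integrable hcont
  have h2 := MeasureTheory.integral_integral hint
  rw [show ((volume.restrict (Set.Ioc (0:ℝ) 1)).prod
      (volume.restrict (Set.Ioc (0:ℝ) 1))) = pmeas from rfl] at h2
  rw [h2]
  rfl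

lemma flux_dsm (B : Fin d → Fin d → (Fin d → ℝ) → ℝ)
    (hBsmooth : ∀ j k, ContDiff ℝ (⊤ : ℕ∞) (B j k)) (α : Fin d → ℝ) :
    DSm (Fflux B α) :=
  dsm_pmeas_integral _ (fluxInt_joint_smooth B hBsmooth α)

lemma flux_dList_bound (hd : 1 ≤ d) (B : Fin d → Fin d → (Fin d → ℝ) → ℝ)
    (hBsmooth : ∀ j k, ContDiff ℝ (⊤ : ℕ∞) (B j k)) (hBbdd : BBounded B) :
    ∀ M : List ((Fin d → ℝ) × (Fin d → ℝ)), ∃ C, 0 ≤ C ∧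
      ∀ α z, ‖dList M (Fflux B α) z‖ ≤ C * Wgt α z := by
  intro M
  obtain ⟨C, hC0, hC⟩ := (pbnd_fluxInt hd B hBsmooth hBbdd).2 M
  refine ⟨C, hC0, fun α z => ?_⟩
  have hsw := dList_pmeas_integral_swap
    (fun q : (ℝ × ℝ) × ((Fin d → ℝ) × (Fin d → ℝ)) => fluxInt B α q.1 q.2)
    (fluxInt_joint_smooth B hBsmooth α) M
  have hFeq : Fflux B α = fun z => ∫ p,
      (fun q : (ℝ × ℝ) × ((Fin d → ℝ) × (Fin d → ℝ)) => fluxInt B α q.1 q.2) (p, z)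
        ∂pmeas := rfl
  rw [hFeq, hsw]
  have hbd : ∀ᵐ p ∂pmeas, ‖dList (M.map (inrV ((Fin d → ℝ) × (Fin d → ℝ))))
      (fun q : (ℝ × ℝ) × ((Fin d → ℝ) × (Fin d → ℝ)) => fluxInt B α q.1 q.2) (p, z)‖
        ≤ C * Wgt α z := by
    refine pmeas_ae_mem.mono (fun p hp => ?_)
    have hpart := dList_partial
      (fun q : (ℝ × ℝ) × ((Fin d → ℝ) × (Fin d → ℝ)) => fluxInt B α q.1 q.2)
      ((fluxInt_joint_smooth B hBsmooth α).dsm) M p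
    have h2 : dList (M.map (inrV ((Fin d → ℝ) × (Fin d → ℝ))))
        (fun q : (ℝ × ℝ) × ((Fin d → ℝ) × (Fin d → ℝ)) => fluxInt B α q.1 q.2) (p, z)
        = dList M (fluxInt B α p) z := (congrFun hpart z).symm
    rw [h2]
    exact hC α p hp z
  have hfin := norm_integral_le_of_norm_le_const hbd
  rw [measureReal_def, pmeas_univ, mul_one] at hfin
  exact hfin
end Flux

section Exp

variable {d : ℕ}

/-- family of `ℂ`-valued functions with all derivatives bounded by `C⬝Wgt^n`, uniformly in `α` -/
def GoodC (n : ℕ) (Φ : (Fin d → ℝ) → ((Fin d → ℝ) × (Fin d → ℝ)) → ℂ) : Prop :=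
  (∀ α, DSm (Φ α)) ∧ ∀ M : List ((Fin d → ℝ) × (Fin d → ℝ)), ∃ C, 0 ≤ C ∧
    ∀ α z, ‖dList M (Φ α) z‖ ≤ C * Wgt α z ^ n

lemma GoodC.mono_n {n n' : ℕ} (h : n ≤ n')
    {Φ : (Fin d → ℝ) → ((Fin d → ℝ) × (Fin d → ℝ)) → ℂ}
    (hΦ : GoodC n Φ) : GoodC n' Φ := by
  refine ⟨hΦ.1, fun M => ?_⟩
  obtain ⟨C, hC0, hC⟩ := hΦ.2 M
  refine ⟨C, hC0, fun α z => (hC α z).trans ?_⟩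
  exact mul_le_mul_of_nonneg_left (pow_le_pow_right₀ (one_le_Wgt α z) h) hC0

lemma GoodC.add {n : ℕ} {Φ Ψ : (Fin d → ℝ) → ((Fin d → ℝ) × (Fin d → ℝ)) → ℂ}
    (hΦ : GoodC n Φ) (hΨ : GoodC n Ψ) :
    GoodC n (fun α z => Φ α z + Ψ α z) := by
  refine ⟨fun α => (hΦ.1 α).add (hΨ.1 α), fun M => ?_⟩
  obtain ⟨C₁, hC₁0, hC₁⟩ := hΦ.2 M
  obtain ⟨C₂, hC₂0, hC₂⟩ := hΨ.2 M
  refine ⟨C₁ + C₂, by linarith, fun α z => ?_⟩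
  rw [dList_add (hΦ.1 α) (hΨ.1 α)]
  refine (norm_add_le _ _).trans ?_
  have h1 := hC₁ α z
  have h2 := hC₂ α z
  have h3 : (0:ℝ) ≤ Wgt α z ^ n := pow_nonneg (Wgt_nonneg α z) n
  nlinarith

lemma GoodC.mul {m n : ℕ} {Φ Ψ : (Fin d → ℝ) → ((Fin d → ℝ) × (Fin d → ℝ)) → ℂ}
    (hΦ : GoodC m Φ) (hΨ : GoodC n Ψ) :
    GoodC (m + n) (fun α z => Φ α z * Ψ α z) := by
  refine ⟨fun α => (hΦ.1 α).mul (hΨ.1 α), fun M => ?_⟩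
  choose Cf hCf0 hCf using hΦ.2
  choose Cg hCg0 hCg using hΨ.2
  refine ⟨((splits M).map (fun q => Cf q.1 * Cg q.2)).sum, ?_, ?_⟩
  · apply List.sum_nonneg
    intro x hx
    simp only [List.mem_map] at hx
    obtain ⟨q, _, rfl⟩ := hx
    exact mul_nonneg (hCf0 _) (hCg0 _)
  · intro α z
    refine (norm_dList_mul_le (hΦ.1 α) (hΨ.1 α) M z).trans ?_
    have hW0 : (0:ℝ) ≤ Wgt α z := Wgt_nonneg α z
    have hterm : ∀ q ∈ splits M,
        ‖dList q.1 (Φ α) z‖ * ‖dList q.2 (Ψ α) z‖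
          ≤ (Cf q.1 * Cg q.2) * Wgt α z ^ (m + n) := by
      intro q _
      have h1 := hCf q.1 α z
      have h2 := hCg q.2 α z
      calc ‖dList q.1 (Φ α) z‖ * ‖dList q.2 (Ψ α) z‖
          ≤ (Cf q.1 * Wgt α z ^ m) * (Cg q.2 * Wgt α z ^ n) :=
            mul_le_mul h1 h2 (norm_nonneg _)
              (mul_nonneg (hCf0 q.1) (pow_nonneg hW0 m))
        _ = (Cf q.1 * Cg q.2) * Wgt α z ^ (m + n) := by
            rw [pow_add]; ring
    refine (list_sum_le_sum _ _ _ hterm).trans ?_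
    rw [show (fun q : List ((Fin d → ℝ) × (Fin d → ℝ)) × List ((Fin d → ℝ) × (Fin d → ℝ)) =>
        Cf q.1 * Cg q.2 * Wgt α z ^ (m + n))
      = fun q => (fun q : List ((Fin d → ℝ) × (Fin d → ℝ)) ×
          List ((Fin d → ℝ) × (Fin d → ℝ)) => Cf q.1 * Cg q.2) q * Wgt α z ^ (m + n) from rfl]
    rw [List.sum_map_mul_right]

lemma GoodC.one : GoodC (d := d) 0 (fun _ _ => 1) := by
  constructor
  · intro α
    exact (contDiff_const :
      ContDiff ℝ (⊤ : ℕ∞) (fun _ : (Fin d → ℝ) × (Fin d → ℝ) => (1:ℂ))).dsm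
  · intro M
    refine ⟨1, zero_le_one, fun α z => ?_⟩
    cases M with
    | nil => simp
    | cons v M => rw [dList_const (1:ℂ) v M]; simp

lemma GoodC.dshift {n : ℕ} {Φ : (Fin d → ℝ) → ((Fin d → ℝ) × (Fin d → ℝ)) → ℂ}
    (hΦ : GoodC n Φ) (v : (Fin d → ℝ) × (Fin d → ℝ)) :
    GoodC n (fun α z => dList [v] (Φ α) z) := by
  refine ⟨fun α => ?_, fun M => ?_⟩
  · have := (hΦ.1 α).dList [v]
    exact this
  · obtain ⟨C, hC0, hC⟩ := hΦ.2 (M ++ [v])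
    refine ⟨C, hC0, fun α z => ?_⟩
    have heq : dList M (fun z => dList [v] (Φ α) z) z
        = dList (M ++ [v]) (Φ α) z := (congrFun (dList_append M [v] (Φ α)) z).symm
    rw [heq]
    exact hC α z

end Exp

section ExpMain

variable {d : ℕ}

/-- the continuous linear map `r ↦ -i r : ℝ → ℂ` -/
def TmI : ℝ →L[ℝ] ℂ := (-Complex.I) • Complex.ofRealCLM

lemma TmI_apply (r : ℝ) : TmI r = -Complex.I * (r : ℂ) := by
  simp [TmI]

lemma TmI_norm (r : ℝ) : ‖TmI r‖ = ‖r‖ := by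
  rw [TmI_apply, norm_mul]
  simp

lemma goodC_flux_deriv (hd : 1 ≤ d) (B : Fin d → Fin d → (Fin d → ℝ) → ℝ)
    (hBsmooth : ∀ j k, ContDiff ℝ (⊤ : ℕ∞) (B j k)) (hBbdd : BBounded B)
    (v : (Fin d → ℝ) × (Fin d → ℝ)) :
    GoodC 1 (fun α z => -Complex.I * ((dList [v] (Fflux B α) z : ℝ) : ℂ)) := by
  have heq : ∀ α : Fin d → ℝ,
      (fun z => -Complex.I * ((dList [v] (Fflux B α) z : ℝ) : ℂ))
      = fun z => TmI (dList [v] (Fflux B α) z) := by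
    intro α
    funext z
    rw [TmI_apply]
  constructor
  · intro α
    beta_reduce
    rw [heq α]
    exact DSm.clm_comp TmI ((flux_dsm B hBsmooth α).dList [v])
  · intro M
    obtain ⟨C, hC0, hC⟩ := flux_dList_bound hd B hBsmooth hBbdd (M ++ [v])
    refine ⟨C, hC0, fun α z => ?_⟩
    have h1 : dList M (fun z => -Complex.I * ((dList [v] (Fflux B α) z : ℝ) : ℂ)) z
        = TmI (dList (M ++ [v]) (Fflux B α) z) := by
      rw [heq α, dList_clm_comp TmI ((flux_dsm B hBsmooth α).dList [v])]
      rw [dList_append]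
    rw [h1, TmI_norm, pow_one]
    exact hC α z
  
lemma exp_good (hd : 1 ≤ d) (B : Fin d → Fin d → (Fin d → ℝ) → ℝ)
    (hBsmooth : ∀ j k, ContDiff ℝ (⊤ : ℕ∞) (B j k)) (hBbdd : BBounded B) :
    ∀ L : List ((Fin d → ℝ) × (Fin d → ℝ)),
      ∃ Φ : (Fin d → ℝ) → ((Fin d → ℝ) × (Fin d → ℝ)) → ℂ,
        (∀ α, dList L (fun z => Complex.exp (-Complex.I * (Fflux B α z : ℂ)))
            = fun z => Complex.exp (-Complex.I * (Fflux B α z : ℂ)) * Φ α z)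
        ∧ GoodC L.length Φ := by
  intro L
  induction L with
  | nil =>
    refine ⟨fun _ _ => 1, fun α => ?_, GoodC.one⟩
    funext z
    rw [dList_nil, mul_one]
  | cons v L ih =>
    obtain ⟨Φ, hΦeq, hΦg⟩ := ih
    refine ⟨fun α z => (-Complex.I * ((dList [v] (Fflux B α) z : ℝ) : ℂ)) * Φ α z
      + dList [v] (Φ α) z, fun α => ?_, ?_⟩
    · funext z
      rw [dList_cons]
      simp only [hΦeq α]
      have hF : DifferentiableAt ℝ (Fflux B α) z := flux_dsm B hBsmooth α [] z
      have hg0 : HasFDerivAt (fun z => ((Fflux B α z : ℝ) : ℂ))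
          (Complex.ofRealCLM.comp (fderiv ℝ (Fflux B α) z)) z :=
        Complex.ofRealCLM.hasFDerivAt.comp z hF.hasFDerivAt
      have hg1 : HasFDerivAt (fun z => -Complex.I * ((Fflux B α z : ℝ) : ℂ))
          ((-Complex.I) • (Complex.ofRealCLM.comp (fderiv ℝ (Fflux B α) z))) z :=
        hg0.const_mul (-Complex.I)
      have he : HasFDerivAt (fun z => Complex.exp (-Complex.I * ((Fflux B α z : ℝ) : ℂ)))
          (Complex.exp (-Complex.I * ((Fflux B α z : ℝ) : ℂ)) •
            ((-Complex.I) • (Complex.ofRealCLM.comp (fderiv ℝ (Fflux B α) z)))) z :=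
        hg1.cexp
      have hΦd : HasFDerivAt (Φ α) (fderiv ℝ (Φ α) z) z := (hΦg.1 α [] z).hasFDerivAt
      rw [(he.fun_mul hΦd).fderiv]
      simp only [ContinuousLinearMap.add_apply, ContinuousLinearMap.smul_apply,
        ContinuousLinearMap.comp_apply, Complex.ofRealCLM_apply, smul_eq_mul]
      show _ = Complex.exp (-Complex.I * ((Fflux B α z : ℝ) : ℂ)) *
        ((-Complex.I * ((fderiv ℝ (Fflux B α) z v : ℝ) : ℂ)) * Φ α z
          + fderiv ℝ (Φ α) z v)
      ring
    · have h1 := (goodC_flux_deriv hd B hBsmooth hBbdd v).mul hΦg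
      have h2 := hΦg.dshift v
      have h3 := h1.add (h2.mono_n (by omega : L.length ≤ 1 + L.length))
      have hlen : (v :: L).length = 1 + L.length := by
        rw [List.length_cons, Nat.add_comm]
      rw [hlen]
      exact h3
  
lemma omega_dList_bound (hd : 1 ≤ d) (B : Fin d → Fin d → (Fin d → ℝ) → ℝ)
    (hBsmooth : ∀ j k, ContDiff ℝ (⊤ : ℕ∞) (B j k)) (hBbdd : BBounded B)
    (L : List ((Fin d → ℝ) × (Fin d → ℝ))) :
    ∃ C, 0 < C ∧ ∀ α z,
      ‖dList L (fun z => Complex.exp (-Complex.I * (Fflux B α z : ℂ))) z‖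
        ≤ C * Wgt α z ^ L.length := by
  obtain ⟨Φ, hΦeq, hΦg⟩ := exp_good hd B hBsmooth hBbdd L
  obtain ⟨C, hC0, hC⟩ := hΦg.2 []
  refine ⟨max C 1, lt_of_lt_of_le one_pos (le_max_right C 1), fun α z => ?_⟩
  rw [hΦeq α]
  rw [norm_mul]
  have habs : ‖Complex.exp (-Complex.I * ((Fflux B α z : ℝ) : ℂ))‖ = 1 := by
    rw [Complex.norm_exp]
    have : (-Complex.I * ((Fflux B α z : ℝ) : ℂ)).re = 0 := by
      simp [Complex.mul_re]
    rw [this, Real.exp_zero]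
  rw [habs, one_mul]
  have := hC α z
  rw [dList_nil] at this
  refine this.trans ?_
  apply mul_le_mul_of_nonneg_right (le_max_left C 1)
  exact pow_nonneg (Wgt_nonneg α z) L.length

end ExpMain


/-- **Derivative estimates for the magnetic flux phase** (equation (E-OmegaB)): if the
antisymmetric field components `B j k` are smooth and bounded with all their derivatives,
then for all multi-indices `a, b` (encoded as lists of coordinate directions) there is
`C > 0` with `|∂_x^a ∂_y^b Ω^B(α,x,y)| ≤ C ⟨x−α⟩^{|a|+|b|} ⟨x−y⟩^{|a|+|b|}`. -/
theorem omegaB_derivative_bounds (d : ℕ) (hd : 1 ≤ d)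
    (B : Fin d → Fin d → (Fin d → ℝ) → ℝ)
    (hBsmooth : ∀ j k, ContDiff ℝ (⊤ : ℕ∞) (B j k))
    (hBanti : ∀ j k x, B j k x = - B k j x)
    (hBbdd : BBounded B) :
    ∀ a b : List (Fin d), ∃ C : ℝ, 0 < C ∧
      ∀ α x y : Fin d → ℝ,
        ‖dList (a.map dirX ++ b.map dirXi)
            (fun q : (Fin d → ℝ) × (Fin d → ℝ) => OmegaB B α q.1 q.2) (x, y)‖ ≤
          C * jap (x - α) ^ (a.length + b.length) * jap (x - y) ^ (a.length + b.length) := by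
  intro a b
  obtain ⟨C, hC0, hC⟩ := omega_dList_bound hd B hBsmooth hBbdd (a.map dirX ++ b.map dirXi)
  refine ⟨C, hC0, fun α x y => ?_⟩
  have heq : (fun q : (Fin d → ℝ) × (Fin d → ℝ) => OmegaB B α q.1 q.2)
      = fun z : (Fin d → ℝ) × (Fin d → ℝ) =>
        Complex.exp (-Complex.I * ((Fflux B α z : ℝ) : ℂ)) := by
    funext z
    rw [OmegaB, flux_eq B hBsmooth hBanti α z]
  rw [heq]
  have hlen : (a.map dirX ++ b.map dirXi).length = a.length + b.length := by simp
  have h2 := hC α (x, y)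
  rw [hlen] at h2
  refine h2.trans (le_of_eq ?_)
  show C * (jap (x - α) * jap (x - y)) ^ (a.length + b.length) = _
  rw [mul_pow]
  ring
end
end
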